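/- arXiv:2003.02535 — 11 statements merged into one kernel-verified Lean document; each statement's English description precedes it below -/
import Mathlib

section
/- Let K be an infinite set and let T be a nested family of subsets of K (i.e., for any two sets Z₁, Z₂ in T, either Z₁ ⊆ Z₂, Z₂ ⊆ Z₁, Z₁ ∩ Z₂ = ∅, or Z₁ ∪ Z₂ = K) which is closed under complementation in K. Then T does not distinguish all free ultrafilters on K: there exist two distinct free (non-principal) ultrafilters U and U' on K such that for every Z ∈ T, Z ∈ U if and only if Z ∈ U'. -/
open Set Filter

/-- Auxiliary: a nested, complement-closed family on an infinite set admits an infinite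
set that is almost-decided by every member. -/
theorem aux_decided {K : Type*} [Infinite K] (T : Set (Set K))
    (hnested : ∀ Z₁ ∈ T, ∀ Z₂ ∈ T,
      Z₁ ⊆ Z₂ ∨ Z₂ ⊆ Z₁ ∨ Z₁ ∩ Z₂ = ∅ ∨ Z₁ ∪ Z₂ = Set.univ)
    (hcompl : ∀ Z ∈ T, Zᶜ ∈ T) :
    ∃ A : Set K, A.Infinite ∧ ∀ Z ∈ T, (A ∩ Z).Finite ∨ (A \ Z).Finite := by
  classical
  have p : K := Classical.arbitrary K
  set T' : Set (Set K) := {Z | Z ∈ T ∧ p ∉ Z ∧ Z.Infinite} with hT'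
  have hlam : ∀ Z₁ ∈ T', ∀ Z₂ ∈ T', Z₁ ⊆ Z₂ ∨ Z₂ ⊆ Z₁ ∨ Z₁ ∩ Z₂ = ∅ := by
    intro Z₁ h₁ Z₂ h₂
    rcases hnested Z₁ h₁.1 Z₂ h₂.1 with h | h | h | h
    · exact Or.inl h
    · exact Or.inr (Or.inl h)
    · exact Or.inr (Or.inr h)
    · exfalso
      have : p ∈ Z₁ ∪ Z₂ := by rw [h]; trivial
      rcases this with h' | h'
      · exact h₁.2.1 h'
      · exact h₂.2.1 h'
  suffices h : ∃ A : Set K, A.Infinite ∧ ∀ Z ∈ T', (A ∩ Z).Finite ∨ (A \ Z).Finite by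
    obtain ⟨A, hA, hdec⟩ := h
    refine ⟨A, hA, ?_⟩
    intro Z hZ
    by_cases hp : p ∈ Z
    · have hc : Zᶜ ∈ T := hcompl Z hZ
      by_cases hfin : Zᶜ.Finite
      · right
        exact hfin.subset (fun x hx => hx.2)
      · have hdc := hdec Zᶜ ⟨hc, by simp [hp], hfin⟩
        rcases hdc with h | h
        · right
          rwa [Set.diff_eq]
        · left
          have : A \ Zᶜ = A ∩ Z := by ext x; simp
          rwa [this] at h
    · by_cases hfin : Z.Finite
      · left; exact hfin.subset Set.inter_subset_right
      · exact hdec Z ⟨hZ, hp, hfin⟩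
  by_cases hne : T'.Nonempty
  swap
  · exact ⟨Set.univ, Set.infinite_univ, fun Z hZ => absurd ⟨Z, hZ⟩ hne⟩
  by_cases hmin : ∃ Z ∈ T', ∀ W ∈ T', W ⊆ Z → W = Z
  · obtain ⟨Z₀, hZ₀, hm⟩ := hmin
    refine ⟨Z₀, hZ₀.2.2, ?_⟩
    intro Z hZ
    rcases hlam Z hZ Z₀ hZ₀ with h | h | h
    · right
      rw [hm Z hZ h]
      simp
    · right
      rw [Set.diff_eq_empty.mpr h]
      exact Set.finite_empty
    · left
      rw [Set.inter_comm] at h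
      rw [h]
      exact Set.finite_empty
  · push_neg at hmin
    obtain ⟨Z₀, hZ₀⟩ := hne
    choose g hgT hgsub hgne using hmin
    let F : ℕ → {Z : Set K // Z ∈ T'} := fun n =>
      Nat.rec ⟨Z₀, hZ₀⟩ (fun _ q => ⟨g q.1 q.2, hgT q.1 q.2⟩) n
    have hFsub : ∀ n, (F (n + 1)).1 ⊆ (F n).1 := fun n => hgsub _ _
    have hFne : ∀ n, (F (n + 1)).1 ≠ (F n).1 := fun n => hgne _ _
    have hmono : ∀ m n, m ≤ n → (F n).1 ⊆ (F m).1 := by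
      intro m n hmn
      induction n with
      | zero => rw [Nat.le_zero.mp hmn]
      | succ k ih =>
        rcases Nat.lt_or_ge m (k + 1) with h | h
        · exact (hFsub k).trans (ih (Nat.lt_succ_iff.mp h))
        · rw [Nat.le_antisymm hmn h]
    have hx : ∀ n, ∃ y, y ∈ (F n).1 ∧ y ∉ (F (n + 1)).1 := by
      intro n
      obtain ⟨y, hy1, hy2⟩ :=
        Set.exists_of_ssubset (ssubset_of_subset_of_ne (hFsub n) (hFne n))
      exact ⟨y, hy1, hy2⟩
    choose x hx1 hx2 using hx
    have hinj : Function.Injective x := by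
      have key : ∀ m n, m < n → x m ≠ x n := by
        intro m n hmn heq
        have h1 : x n ∈ (F (m + 1)).1 := hmono (m + 1) n hmn (hx1 n)
        rw [← heq] at h1
        exact hx2 m h1
      intro m n heq
      rcases lt_trichotomy m n with h | h | h
      · exact absurd heq (key m n h)
      · exact h
      · exact absurd heq.symm (key n m h)
    refine ⟨Set.range x, Set.infinite_range_of_injective hinj, ?_⟩
    intro Z hZ
    by_cases h1 : ∃ n, (F n).1 ⊆ Z
    · obtain ⟨n, hn⟩ := h1
      right
      have hsub : Set.range x \ Z ⊆ x '' (Set.Iio n) := by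
        rintro a ⟨⟨m, rfl⟩, haZ⟩
        refine ⟨m, ?_, rfl⟩
        by_contra hm
        exact haZ (hn (hmono n m (le_of_not_gt (by simpa using hm)) (hx1 m)))
      exact ((Set.finite_Iio n).image x).subset hsub
    · push_neg at h1
      by_cases h2 : ∃ n, Z ∩ (F n).1 = ∅
      · obtain ⟨N, hN⟩ := h2
        left
        have hsub : Set.range x ∩ Z ⊆ x '' (Set.Iio N) := by
          rintro a ⟨⟨m, rfl⟩, haZ⟩
          refine ⟨m, ?_, rfl⟩
          by_contra hm
          have hle : N ≤ m := le_of_not_gt (by simpa using hm)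
          have : x m ∈ Z ∩ (F N).1 := ⟨haZ, hmono N m hle (hx1 m)⟩
          rw [hN] at this
          exact this
        exact ((Set.finite_Iio N).image x).subset hsub
      · push_neg at h2
        have hZsub : ∀ n, Z ⊆ (F n).1 := by
          intro n
          rcases hlam Z hZ (F n).1 (F n).2 with h | h | h
          · exact h
          · exact absurd h (h1 n)
          · exact absurd h (h2 n).ne_empty
        left
        have : Set.range x ∩ Z = ∅ := by
          ext a
          simp only [Set.mem_inter_iff, Set.mem_range, Set.mem_empty_iff_false, iff_false,
            not_and]
          rintro ⟨m, rfl⟩ haZ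
          exact hx2 m (hZsub (m + 1) haZ)
        rw [this]
        exact Set.finite_empty

/-- No nested, complementation-closed family of subsets of an infinite set K
distinguishes all free ultrafilters on K. -/
theorem stmt_0 {K : Type*} [Infinite K] (T : Set (Set K))
    (hnested : ∀ Z₁ ∈ T, ∀ Z₂ ∈ T,
      Z₁ ⊆ Z₂ ∨ Z₂ ⊆ Z₁ ∨ Z₁ ∩ Z₂ = ∅ ∨ Z₁ ∪ Z₂ = Set.univ)
    (hcompl : ∀ Z ∈ T, Zᶜ ∈ T) :
    ∃ U U' : Ultrafilter K, U ≠ U' ∧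
      (∀ A : Set K, A.Finite → A ∉ U) ∧
      (∀ A : Set K, A.Finite → A ∉ U') ∧
      (∀ Z ∈ T, (Z ∈ U ↔ Z ∈ U')) := by
  classical
  obtain ⟨A, hAinf, hdec⟩ := aux_decided T hnested hcompl
  let e : ℕ ↪ A := hAinf.natEmbedding
  let y : ℕ → K := fun n => (e n : K)
  have hyinj : Function.Injective y := fun m n h => e.injective (Subtype.ext h)
  have hyA : ∀ n, y n ∈ A := fun n => (e n).2
  set A₁ : Set K := Set.range (fun n => y (2 * n)) with hA₁def
  set A₂ : Set K := Set.range (fun n => y (2 * n + 1)) with hA₂def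
  have hA₁A : A₁ ⊆ A := by rintro a ⟨n, rfl⟩; exact hyA _
  have hA₂A : A₂ ⊆ A := by rintro a ⟨n, rfl⟩; exact hyA _
  have hA₁inf : A₁.Infinite :=
    Set.infinite_range_of_injective (fun m n h => by
      have := hyinj h; omega)
  have hA₂inf : A₂.Infinite :=
    Set.infinite_range_of_injective (fun m n h => by
      have := hyinj h; omega)
  have hdisj : A₁ ∩ A₂ = ∅ := by
    ext a
    simp only [Set.mem_inter_iff, Set.mem_range, Set.mem_empty_iff_false, iff_false, not_and]
    rintro ⟨m, rfl⟩ ⟨n, hn⟩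
    have := hyinj hn
    omega
  haveI h1 : (Filter.cofinite ⊓ 𝓟 A₁).NeBot := hA₁inf.cofinite_inf_principal_neBot
  haveI h2 : (Filter.cofinite ⊓ 𝓟 A₂).NeBot := hA₂inf.cofinite_inf_principal_neBot
  set U : Ultrafilter K := Ultrafilter.of (Filter.cofinite ⊓ 𝓟 A₁) with hU
  set U' : Ultrafilter K := Ultrafilter.of (Filter.cofinite ⊓ 𝓟 A₂) with hU'
  have hUle : (U : Filter K) ≤ Filter.cofinite := (Ultrafilter.of_le _).trans inf_le_left
  have hU'le : (U' : Filter K) ≤ Filter.cofinite := (Ultrafilter.of_le _).trans inf_le_left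
  have hA₁U : A₁ ∈ U := Filter.le_principal_iff.mp ((Ultrafilter.of_le _).trans inf_le_right)
  have hA₂U' : A₂ ∈ U' := Filter.le_principal_iff.mp ((Ultrafilter.of_le _).trans inf_le_right)
  have hfreeU : ∀ S : Set K, S.Finite → S ∉ U := by
    intro S hS
    have : Sᶜ ∈ U := hUle hS.compl_mem_cofinite
    exact Ultrafilter.compl_mem_iff_notMem.mp this
  have hfreeU' : ∀ S : Set K, S.Finite → S ∉ U' := by
    intro S hS
    have : Sᶜ ∈ U' := hU'le hS.compl_mem_cofinite
    exact Ultrafilter.compl_mem_iff_notMem.mp this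
  refine ⟨U, U', ?_, hfreeU, hfreeU', ?_⟩
  · intro heq
    have : A₁ ∩ A₂ ∈ U := Filter.inter_mem hA₁U (heq ▸ hA₂U')
    rw [hdisj] at this
    exact hfreeU ∅ Set.finite_empty this
  · intro Z hZ
    rcases hdec Z hZ with h | h
    · refine iff_of_false ?_ ?_
      · intro hZU
        exact hfreeU (A₁ ∩ Z) (h.subset (Set.inter_subset_inter_left Z hA₁A))
          (Filter.inter_mem hA₁U hZU)
      · intro hZU'
        exact hfreeU' (A₂ ∩ Z) (h.subset (Set.inter_subset_inter_left Z hA₂A))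
          (Filter.inter_mem hA₂U' hZU')
    · have hcm : (A \ Z)ᶜ ∈ Filter.cofinite := h.compl_mem_cofinite
      refine iff_of_true ?_ ?_
      · have : A₁ ∩ (A \ Z)ᶜ ∈ U := Filter.inter_mem hA₁U (hUle hcm)
        refine Filter.mem_of_superset this ?_
        rintro a ⟨ha1, ha2⟩
        by_contra haZ
        exact ha2 ⟨hA₁A ha1, haZ⟩
      · have : A₂ ∩ (A \ Z)ᶜ ∈ U' := Filter.inter_mem hA₂U' (hU'le hcm)
        refine Filter.mem_of_superset this ?_
        rintro a ⟨ha1, ha2⟩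
        by_contra haZ
        exact ha2 ⟨hA₂A ha1, haZ⟩
end

section
/- Let S be a set of separations of a set V (unordered pairs {A,B} with A ∪ B = V), oriented via the partial order (A,B) ≤ (C,D) iff A ⊆ C and B ⊇ D. Let O be a consistent orientation of a nested such set S, meaning O picks exactly one orientation of each element of S and there are no two distinct separations r, s ∈ S with orientations r⃗ < s⃗ such that the inverses of both r⃗ and s⃗ lie in O. Define a relation ∼ on O by (C,D) ∼ (C',D') iff there exists (U,W) ∈ O with (C,D) ≤ (U,W) and (C',D') ≤ (U,W). If O contains no small separation (no (A,B) with (A,B) ≤ (B,A)), then ∼ is an equivalence relation on O. -/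
open Set

variable {V : Type*}

/-- The inverse (swap) of an oriented separation. -/
def swapS (p : Set V × Set V) : Set V × Set V := (p.2, p.1)

/-- The partial order on oriented separations: (A,B) ≤ (C,D) iff A ⊆ C and D ⊆ B. -/
def sepLe (p q : Set V × Set V) : Prop := p.1 ⊆ q.1 ∧ q.2 ⊆ p.2

/-- Two oriented separations are nested if they have comparable orientations. -/
def NestedPair (p q : Set V × Set V) : Prop :=
  sepLe p q ∨ sepLe q p ∨ sepLe p (swapS q) ∨ sepLe (swapS q) p

/-- A set O of oriented separations is consistent: it contains no two orientations
pointing away from each other, i.e. no p, q of distinct underlying separations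
with (swap p) ≤ q. -/
def ConsistentO (O : Set (Set V × Set V)) : Prop :=
  ∀ p ∈ O, ∀ q ∈ O, p ≠ q → p ≠ swapS q → ¬ sepLe (swapS p) q

/-- The corridor relation on O: related iff some element of O lies above both. -/
def corRel (O : Set (Set V × Set V)) (p q : Set V × Set V) : Prop :=
  ∃ u ∈ O, sepLe p u ∧ sepLe q u

/-- A_γ for the corridor γ of p: the union of the first components of all
elements of O in the corridor of p. -/
def Aset (O : Set (Set V × Set V)) (p : Set V × Set V) : Set V :=
  {v | ∃ q ∈ O, corRel O q p ∧ v ∈ q.1}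

/-- The part Π of an orientation O. -/
def partOf (O : Set (Set V × Set V)) : Set V := {v | ∀ p ∈ O, v ∈ p.2}

/-- A separation of the set V. -/
def IsSetSep (p : Set V × Set V) : Prop := p.1 ∪ p.2 = Set.univ

/-- The corridor relation ∼ on a consistent orientation O of a nested
set S of separations of V with no small separations in O is an equivalence relation. -/
theorem stmt_4 {V : Type*} (S O : Set (Set V × Set V))
    (hSsep : ∀ p ∈ S, IsSetSep p)
    (hSsymm : ∀ p ∈ S, swapS p ∈ S)
    (hSnested : ∀ p ∈ S, ∀ q ∈ S, NestedPair p q)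
    (hOS : O ⊆ S)
    (horient : ∀ p ∈ S, (p ∈ O ∨ swapS p ∈ O) ∧ ¬ (p ∈ O ∧ swapS p ∈ O))
    (hcons : ConsistentO O)
    (hnosmall : ∀ p ∈ O, ¬ sepLe p (swapS p)) :
    (∀ p ∈ O, corRel O p p) ∧
    (∀ p ∈ O, ∀ q ∈ O, corRel O p q → corRel O q p) ∧
    (∀ p ∈ O, ∀ q ∈ O, ∀ r ∈ O, corRel O p q → corRel O q r → corRel O p r) := by
  refine ⟨fun p hp => ⟨p, hp, ⟨subset_rfl, subset_rfl⟩, ⟨subset_rfl, subset_rfl⟩⟩,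
    fun p _ q _ ⟨u, hu, h1, h2⟩ => ⟨u, hu, h2, h1⟩, ?_⟩
  rintro p hp q hq r hr ⟨u, hu, hpu, hqu⟩ ⟨w, hw, hqw, hrw⟩
  rcases eq_or_ne u w with rfl | huw
  · exact ⟨u, hu, hpu, hrw⟩
  rcases hSnested u (hOS hu) w (hOS hw) with h | h | h | h
  · exact ⟨w, hw, ⟨hpu.1.trans h.1, h.2.trans hpu.2⟩, hrw⟩
  · exact ⟨u, hu, hpu, ⟨hrw.1.trans h.1, h.2.trans hrw.2⟩⟩
  · -- sepLe u (swapS w): u.1 ⊆ w.2 and w.1 ⊆ u.2, so q.2 = V and q is small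
    exfalso
    apply hnosmall q hq
    have hq2 : q.2 = Set.univ := by
      have hsep := hSsep w (hOS hw)
      apply Set.eq_univ_of_univ_subset
      rw [← hsep]
      exact Set.union_subset (h.2.trans hqu.2) hqw.2
    exact ⟨by simp [swapS, hq2], by simp [swapS, hq2]⟩
  · -- sepLe (swapS w) u
    exfalso
    rcases eq_or_ne w (swapS u) with rfl | hws
    · apply hnosmall q hq
      have hq2 : q.2 = Set.univ := by
        have hsep := hSsep u (hOS hu)
        apply Set.eq_univ_of_univ_subset
        rw [← hsep]
        exact Set.union_subset hqw.2 hqu.2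
      exact ⟨by simp [swapS, hq2], by simp [swapS, hq2]⟩
    · exact hcons w hw u hu (Ne.symm huw) hws h
end

section
/- Let O be a consistent orientation of a nested set N of separations of a set V with no small separations in N. If (C,D), (C',D') ∈ O and C \ D' is non-empty, then (C,D) and (C',D') are comparable, i.e., (C,D) ≤ (C',D') or (C',D') ≤ (C,D). -/
open Set

variable {V : Type*}

/-- In a consistent orientation O of a nested set N of separations of V
with no small separations, if (C,D), (C',D') ∈ O and C \ D' ≠ ∅, then the two
oriented separations are ≤-comparable. -/
theorem stmt_5 {V : Type*} (N O : Set (Set V × Set V))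
    (hNsep : ∀ p ∈ N, IsSetSep p)
    (hNsymm : ∀ p ∈ N, swapS p ∈ N)
    (hNnested : ∀ p ∈ N, ∀ q ∈ N, NestedPair p q)
    (hnosmall : ∀ p ∈ N, ¬ sepLe p (swapS p))
    (hON : O ⊆ N)
    (horient : ∀ p ∈ N, (p ∈ O ∨ swapS p ∈ O) ∧ ¬ (p ∈ O ∧ swapS p ∈ O))
    (hcons : ConsistentO O) :
    ∀ p ∈ O, ∀ q ∈ O, (p.1 \ q.2).Nonempty → sepLe p q ∨ sepLe q p := by
  intro p hp q hq hne
  rcases hNnested p (hON hp) q (hON hq) with h | h | h | h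
  · exact Or.inl h
  · exact Or.inr h
  · -- p.1 ⊆ q.2 contradicts nonempty p.1 \ q.2
    obtain ⟨v, hv1, hv2⟩ := hne
    exact absurd (h.1 hv1) hv2
  · -- sepLe (swapS q) p: use consistency
    by_cases hqp : q = p
    · exact Or.inl (hqp ▸ ⟨subset_rfl, subset_rfl⟩)
    by_cases hqsp : q = swapS p
    · exact absurd ⟨hp, hqsp ▸ hq⟩ (horient p (hON hp)).2
    · exact absurd h (hcons q hq p hp hqp hqsp)
end

section
/- Let G be a graph, O a consistent orientation of a regular nested set of separations of G, Π its part, and γ a corridor of O with A_γ = ⋃{C : (C,D) ∈ γ}. For every finite subset U of A_γ there is a separation (C,D) ∈ γ such that U ⊆ C and U \ Π ⊆ C \ D. -/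
open Set

variable {V : Type*}

/-- A separation of the graph G: the two sides cover V and no edge jumps the separator. -/
def IsGraphSep (G : SimpleGraph V) (p : Set V × Set V) : Prop :=
  p.1 ∪ p.2 = Set.univ ∧ ∀ a ∈ p.1 \ p.2, ∀ b ∈ p.2 \ p.1, ¬ G.Adj a b

/-- The component of G − X containing some vertex v ∉ X, described via walks avoiding X. -/
def ComponentOf (G : SimpleGraph V) (X C : Set V) : Prop :=
  ∃ v, v ∉ X ∧ C = {w | ∃ p : G.Walk v w, ∀ x ∈ p.support, x ∉ X}

/-- The neighbourhood of a vertex set C: vertices outside C adjacent to C. -/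
def nbhd (G : SimpleGraph V) (C : Set V) : Set V :=
  {x | x ∉ C ∧ ∃ c ∈ C, G.Adj x c}

/-- Two elements of a consistent orientation O of a nested set are comparable,
provided case 3 (pointing toward each other) is excluded. -/
lemma comparable_aux {V : Type*} {S O : Set (Set V × Set V)}
    (hSnested : ∀ p ∈ S, ∀ q ∈ S, NestedPair p q)
    (hOS : O ⊆ S)
    (horient : ∀ p ∈ S, (p ∈ O ∨ swapS p ∈ O) ∧ ¬ (p ∈ O ∧ swapS p ∈ O))
    (hcons : ConsistentO O)
    {w w' : Set V × Set V} (hw : w ∈ O) (hw' : w' ∈ O)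
    (h3 : ¬ sepLe w (swapS w')) :
    sepLe w w' ∨ sepLe w' w := by
  by_cases heq : w = w'
  · exact Or.inl (heq ▸ ⟨subset_rfl, subset_rfl⟩)
  rcases hSnested w (hOS hw) w' (hOS hw') with h | h | h | h
  · exact Or.inl h
  · exact Or.inr h
  · exact absurd h h3
  · by_cases hsw : w = swapS w'
    · exact absurd ⟨hw', hsw ▸ hw⟩ (horient w' (hOS hw')).2
    · exact absurd ⟨h.2, h.1⟩ (hcons w hw w' hw' heq hsw)

/-- If γ is a corridor (here represented by p ∈ O) of a consistent
orientation O of a regular nested set of separations of G, and U is a finite subset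
of A_γ, then some (C,D) in γ has U ⊆ C and U \ Π ⊆ C \ D. -/
theorem stmt_7 {V : Type*} (G : SimpleGraph V) (S O : Set (Set V × Set V))
    (hSsep : ∀ p ∈ S, IsGraphSep G p)
    (hSsymm : ∀ p ∈ S, swapS p ∈ S)
    (hSnested : ∀ p ∈ S, ∀ q ∈ S, NestedPair p q)
    (hreg : ∀ p ∈ S, ¬ sepLe p (swapS p))
    (hOS : O ⊆ S)
    (horient : ∀ p ∈ S, (p ∈ O ∨ swapS p ∈ O) ∧ ¬ (p ∈ O ∧ swapS p ∈ O))
    (hcons : ConsistentO O) :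
    ∀ p ∈ O, ∀ U : Set V, U.Finite → U ⊆ Aset O p →
      ∃ q ∈ O, corRel O q p ∧ U ⊆ q.1 ∧ U \ partOf O ⊆ q.1 \ q.2 := by
  intro p hpO U hUfin hUA
  -- any two elements of O above p are comparable
  have hcomp : ∀ w ∈ O, ∀ w' ∈ O, sepLe p w → sepLe p w' →
      sepLe w w' ∨ sepLe w' w := by
    intro w hw w' hw' hpw hpw'
    refine comparable_aux hSnested hOS horient hcons hw hw' ?_
    intro h3
    exact hreg p (hOS hpO)
      ⟨(hpw.1.trans h3.1).trans hpw'.2, (hpw.1.trans h3.1).trans hpw'.2⟩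
  -- for each u ∈ U there is a witness in the corridor above p
  have hwit : ∀ u ∈ U, ∃ w ∈ O, sepLe p w ∧ u ∈ w.1 ∧
      (u ∉ partOf O → u ∉ w.2) := by
    intro u hu
    obtain ⟨q, hqO, ⟨v, hvO, hqv, hpv⟩, huq⟩ := hUA hu
    have huv : u ∈ v.1 := hqv.1 huq
    by_cases hupart : u ∈ partOf O
    · exact ⟨v, hvO, hpv, huv, fun h => absurd hupart h⟩
    · have hex : ∃ r ∈ O, u ∉ r.2 := by
        by_contra hc
        push_neg at hc
        exact hupart fun r hr => hc r hr
      obtain ⟨r, hrO, hur⟩ := hex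
      have hcv : sepLe r v ∨ sepLe v r := by
        refine comparable_aux hSnested hOS horient hcons hrO hvO ?_
        intro h3
        exact hur (h3.2 huv)
      rcases hcv with h | h
      · exact ⟨v, hvO, hpv, huv, fun _ hu2 => hur (h.2 hu2)⟩
      · exact ⟨r, hrO, ⟨hpv.1.trans h.1, h.2.trans hpv.2⟩, h.1 huv, fun _ => hur⟩
  -- combine witnesses over the finite set U
  have main : ∀ T : Set V, T.Finite → T ⊆ U →
      ∃ q ∈ O, sepLe p q ∧ ∀ u ∈ T, u ∈ q.1 ∧ (u ∉ partOf O → u ∉ q.2) := by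
    intro T hT
    refine Set.Finite.induction_on
      (motive := fun T _ => T ⊆ U →
        ∃ q ∈ O, sepLe p q ∧ ∀ u ∈ T, u ∈ q.1 ∧ (u ∉ partOf O → u ∉ q.2))
      T hT ?_ ?_
    · exact fun _ => ⟨p, hpO, ⟨subset_rfl, subset_rfl⟩,
        fun u hu => absurd hu (notMem_empty u)⟩
    · intro a T hnotin hfin ih hsub
      obtain ⟨q, hqO, hpq, hq⟩ := ih ((subset_insert _ _).trans hsub)
      obtain ⟨w, hwO, hpw, huw, hw2⟩ := hwit _ (hsub (mem_insert _ _))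
      rcases hcomp q hqO w hwO hpq hpw with h | h
      · refine ⟨w, hwO, hpw, fun u hu => ?_⟩
        rcases mem_insert_iff.mp hu with rfl | hu
        · exact ⟨huw, hw2⟩
        · exact ⟨h.1 (hq u hu).1, fun hnp hw2' => (hq u hu).2 hnp (h.2 hw2')⟩
      · refine ⟨q, hqO, hpq, fun u hu => ?_⟩
        rcases mem_insert_iff.mp hu with rfl | hu
        · exact ⟨h.1 huw, fun hnp hq2 => hw2 hnp (h.2 hq2)⟩
        · exact hq u hu
  obtain ⟨q, hqO, hpq, hq⟩ := main U hUfin subset_rfl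
  exact ⟨q, hqO, ⟨q, hqO, ⟨subset_rfl, subset_rfl⟩, hpq⟩,
    fun u hu => (hq u hu).1,
    fun u hu => ⟨(hq u hu.1).1, (hq u hu.1).2 hu.2⟩⟩
end

section
/- Let G be a graph, O a consistent orientation of a regular nested set of separations of G, and Π its part. Every connected set of vertices U of G avoiding Π is contained in A_γ for some corridor γ of O. -/
open Set

variable {V : Type*}

/-- Every connected set of vertices of G avoiding the part Π of a
consistent orientation O of a regular nested set of separations of G is contained
in A_γ for some corridor γ of O. -/
theorem stmt_8 {V : Type*} (G : SimpleGraph V) (S O : Set (Set V × Set V))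
    (hSsep : ∀ p ∈ S, IsGraphSep G p)
    (hSsymm : ∀ p ∈ S, swapS p ∈ S)
    (hSnested : ∀ p ∈ S, ∀ q ∈ S, NestedPair p q)
    (hreg : ∀ p ∈ S, ¬ sepLe p (swapS p))
    (hOS : O ⊆ S)
    (horient : ∀ p ∈ S, (p ∈ O ∨ swapS p ∈ O) ∧ ¬ (p ∈ O ∧ swapS p ∈ O))
    (hcons : ConsistentO O) :
    ∀ U : Set V, (G.induce U).Connected → (∀ v ∈ U, v ∉ partOf O) →
      ∃ p ∈ O, U ⊆ Aset O p := by
  intro U hconn hdis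
  have hrefl : ∀ p : Set V × Set V, sepLe p p := fun p => ⟨subset_rfl, subset_rfl⟩
  have htr : ∀ {p q r : Set V × Set V}, sepLe p q → sepLe q r → sepLe p r :=
    fun h1 h2 => ⟨h1.1.trans h2.1, h2.2.trans h1.2⟩
  -- transitivity of the corridor relation
  have corTrans : ∀ q q' r : Set V × Set V, q ∈ O → corRel O q r → corRel O q' q →
      corRel O q' r := by
    intro q q' r hq ⟨u, hu, hqu, hru⟩ ⟨u', hu', hq'u', hqu'⟩
    rcases hSnested u (hOS hu) u' (hOS hu') with h | h | h | h
    · exact ⟨u', hu', hq'u', htr hru h⟩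
    · exact ⟨u, hu, htr hq'u' h, hru⟩
    · -- u.1 ⊆ u'.2 and u'.1 ⊆ u.2 : then q.1 ⊆ q.2, contradicting regularity
      exact absurd ⟨hqu.1.trans (h.1.trans hqu'.2), hqu.1.trans (h.1.trans hqu'.2)⟩
        (hreg q (hOS hq))
    · by_cases he : u' = u
      · exact ⟨u, hu, htr hq'u' (he ▸ hrefl u'), hru⟩
      · by_cases he2 : u' = swapS u
        · exact absurd ⟨hu, he2 ▸ hu'⟩ (horient u (hOS hu)).2
        · exact absurd h (hcons u' hu' u hu he he2)
  -- adjacent (or equal) vertices have corridor-related witnesses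
  have edgeClaim : ∀ p ∈ O, ∀ q ∈ O, ∀ v w : V, v ∈ p.1 \ p.2 → w ∈ q.1 \ q.2 →
      (v = w ∨ G.Adj v w) → corRel O p q := by
    intro p hp q hq v w hv hw hvw
    rcases hSnested p (hOS hp) q (hOS hq) with h | h | h | h
    · exact ⟨q, hq, h, hrefl q⟩
    · exact ⟨p, hp, hrefl p, h⟩
    · -- p.1 ⊆ q.2 and q.1 ⊆ p.2 : v ∈ q.2 \ q.1, w ∈ q.1 \ q.2
      have hv2 : v ∈ q.2 \ q.1 := ⟨h.1 hv.1, fun hvq1 => hv.2 (h.2 hvq1)⟩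
      rcases hvw with rfl | hadj
      · exact absurd hw.1 hv2.2
      · exact absurd hadj.symm ((hSsep q (hOS hq)).2 w hw v hv2)
    · by_cases he : q = p
      · exact ⟨p, hp, hrefl p, he ▸ hrefl q⟩
      · by_cases he2 : q = swapS p
        · exact absurd ⟨hp, he2 ▸ hq⟩ (horient p (hOS hp)).2
        · exact absurd h (hcons q hq p hp he he2)
  -- U is nonempty
  obtain ⟨v0⟩ := hconn.nonempty
  -- witness for v0
  have hwit : ∀ v ∈ U, ∃ q ∈ O, v ∈ q.1 \ q.2 := by
    intro v hv
    have := hdis v hv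
    simp only [partOf, Set.mem_setOf_eq] at this
    push_neg at this
    obtain ⟨q, hq, hq2⟩ := this
    refine ⟨q, hq, ?_, hq2⟩
    have := (hSsep q (hOS hq)).1
    have hvuniv : v ∈ q.1 ∪ q.2 := this ▸ Set.mem_univ v
    exact hvuniv.resolve_right hq2
  obtain ⟨p0, hp0, hv0⟩ := hwit v0 v0.2
  refine ⟨p0, hp0, ?_⟩
  -- propagate along walks
  have step : ∀ a b : U, (G.induce U).Walk a b →
      (∃ q ∈ O, corRel O q p0 ∧ (a : V) ∈ q.1 \ q.2) →
      (∃ q ∈ O, corRel O q p0 ∧ (b : V) ∈ q.1 \ q.2) := by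
    intro a b wk
    induction wk with
    | nil => exact id
    | @cons a b c hadj wk ih =>
      intro ⟨q, hq, hqrel, haq⟩
      obtain ⟨q', hq', hbq'⟩ := hwit b b.2
      have hadj' : G.Adj (b : V) (a : V) := by
        have : G.Adj (a : V) (b : V) := hadj
        exact this.symm
      have hrel' : corRel O q' q := edgeClaim q' hq' q hq b a hbq' haq (Or.inr hadj')
      exact ih ⟨q', hq', corTrans q q' p0 hq hqrel hrel', hbq'⟩
  have key : ∀ w : U, ∃ q ∈ O, corRel O q p0 ∧ (w : V) ∈ q.1 \ q.2 := by
    intro w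
    obtain ⟨wk⟩ := hconn v0 w
    exact step v0 w wk ⟨p0, hp0, ⟨p0, hp0, hrefl p0, hrefl p0⟩, hv0⟩
  intro w hw
  obtain ⟨q, hq, hqrel, hwq⟩ := key ⟨w, hw⟩
  exact ⟨q, hq, hqrel, hwq.1⟩
end

section
/- Let G be a graph, O a consistent orientation of a regular nested set of separations of G, and Π its part. Suppose every separator A ∩ B of a separation {A,B} in the nested set induces a complete subgraph of G. Then for every corridor γ of O, the set A_γ ∩ Π induces a complete subgraph of G. -/
open Set

variable {V : Type*}

/-- If every separator of the regular nested set S induces a complete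
subgraph of G, then for every corridor γ of a consistent orientation O of S the set
A_γ ∩ Π induces a complete subgraph of G. -/
theorem stmt_9 {V : Type*} (G : SimpleGraph V) (S O : Set (Set V × Set V))
    (hSsep : ∀ p ∈ S, IsGraphSep G p)
    (hSsymm : ∀ p ∈ S, swapS p ∈ S)
    (hSnested : ∀ p ∈ S, ∀ q ∈ S, NestedPair p q)
    (hreg : ∀ p ∈ S, ¬ sepLe p (swapS p))
    (hOS : O ⊆ S)
    (horient : ∀ p ∈ S, (p ∈ O ∨ swapS p ∈ O) ∧ ¬ (p ∈ O ∧ swapS p ∈ O))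
    (hcons : ConsistentO O)
    (hclique : ∀ p ∈ S, ∀ x ∈ p.1 ∩ p.2, ∀ y ∈ p.1 ∩ p.2, x ≠ y → G.Adj x y) :
    ∀ p ∈ O, ∀ x ∈ Aset O p ∩ partOf O, ∀ y ∈ Aset O p ∩ partOf O,
      x ≠ y → G.Adj x y := by
  rintro p hp x ⟨⟨q, hq, ⟨u, hu, hqu, hpu⟩, hxq⟩, hxP⟩
    y ⟨⟨r, hr, ⟨w, hw, hrw, hpw⟩, hyr⟩, hyP⟩ hxy
  have hcomp : sepLe u w ∨ sepLe w u := by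
    rcases hSnested u (hOS hu) w (hOS hw) with h | h | h | h
    · exact Or.inl h
    · exact Or.inr h
    · -- sepLe u (swapS w): u.1 ⊆ w.2 and w.1 ⊆ u.2, forces p.2 = univ
      exfalso
      have hp2 : p.2 = univ := by
        apply eq_univ_of_univ_subset
        rw [← (hSsep w (hOS hw)).1]
        exact union_subset (h.2.trans hpu.2) hpw.2
      refine hreg p (hOS hp) ⟨?_, ?_⟩ <;>
        · intro v _; show v ∈ p.2; rw [hp2]; exact mem_univ v
    · -- sepLe (swapS u) w: forbidden by consistency unless u = w or u = swapS w
      by_cases huw : u = w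
      · exact Or.inl (huw ▸ ⟨subset_rfl, subset_rfl⟩)
      by_cases huw' : w = swapS u
      · exact absurd ⟨hu, huw' ▸ hw⟩ (horient u (hOS hu)).2
      · exact absurd h (hcons w hw u hu (Ne.symm huw) huw')
  obtain ⟨t, ht, hqt, hrt⟩ : ∃ t ∈ O, sepLe q t ∧ sepLe r t := by
    rcases hcomp with h | h
    · exact ⟨w, hw, ⟨(hqu.1.trans h.1), h.2.trans hqu.2⟩, hrw⟩
    · exact ⟨u, hu, hqu, ⟨hrw.1.trans h.1, h.2.trans hrw.2⟩⟩
  exact hclique t (hOS ht) x ⟨hqt.1 hxq, hxP t ht⟩ y ⟨hrt.1 hyr, hyP t ht⟩ hxy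
end

section
/- Let G be a graph and T a nested set of separations of G. Let O be a consistent orientation of T with part Π = ⋂{B : (A,B) ∈ O}. If P = x v₁ … v_n y is a path in G with n ≥ 1, endvertices x, y ∈ Π, and all internal vertices v₁,…,v_n outside Π, then there is a separation {A,B} in T whose separator A ∩ B contains both x and y. -/
open Set

variable {V : Type*}

lemma lemA {V : Type*} (G : SimpleGraph V) (T O : Set (Set V × Set V))
    (hTsep : ∀ p ∈ T, IsGraphSep G p)
    (hTnested : ∀ p ∈ T, ∀ q ∈ T, NestedPair p q)
    (hOT : O ⊆ T)
    (horient : ∀ p ∈ T, (p ∈ O ∨ swapS p ∈ O) ∧ ¬ (p ∈ O ∧ swapS p ∈ O))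
    (hcons : ConsistentO O)
    {p q : Set V × Set V} (hp : p ∈ O) (hq : q ∈ O)
    {u v : V} (hu : u ∈ p.1 \ p.2) (hv : v ∈ q.1 \ q.2) (huv : G.Adj u v) :
    p.1 \ p.2 ⊆ q.1 \ q.2 ∨ q.1 \ q.2 ⊆ p.1 \ p.2 := by
  by_cases hpq : p = q
  · left; subst hpq; exact subset_rfl
  by_cases hps : p = swapS q
  · exfalso
    have hsw : swapS p = q := by simp [hps, swapS]
    exact (horient p (hOT hp)).2 ⟨hp, by rw [hsw]; exact hq⟩
  rcases hTnested p (hOT hp) q (hOT hq) with h | h | h | h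
  · left; intro a ha; exact ⟨h.1 ha.1, fun h2 => ha.2 (h.2 h2)⟩
  · right; intro a ha; exact ⟨h.1 ha.1, fun h2 => ha.2 (h.2 h2)⟩
  · exfalso
    have hu2 : u ∈ q.2 \ q.1 := ⟨h.1 hu.1, fun h1 => hu.2 (h.2 h1)⟩
    exact (hTsep q (hOT hq)).2 v hv u hu2 huv.symm
  · exfalso
    have hqp : q ≠ p := fun e => hpq e.symm
    have hqs : q ≠ swapS p := by
      intro e; apply hps; simp [e, swapS]
    exact hcons q hq p hp hqp hqs h

lemma lemSingle {V : Type*} (G : SimpleGraph V) (T O : Set (Set V × Set V))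
    (hTsep : ∀ p ∈ T, IsGraphSep G p) (hOT : O ⊆ T)
    {a : V} (ha : a ∉ partOf O) : ∃ p ∈ O, a ∈ p.1 \ p.2 := by
  simp only [partOf, mem_setOf_eq, not_forall] at ha
  obtain ⟨p, hp, hp2⟩ := ha
  refine ⟨p, hp, ?_, hp2⟩
  have hcov := (hTsep p (hOT hp)).1
  have hmem : a ∈ p.1 ∪ p.2 := by rw [hcov]; trivial
  exact hmem.resolve_right hp2

lemma lemB {V : Type*} (G : SimpleGraph V) (T O : Set (Set V × Set V))
    (hTsep : ∀ p ∈ T, IsGraphSep G p)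
    (hTnested : ∀ p ∈ T, ∀ q ∈ T, NestedPair p q)
    (hOT : O ⊆ T)
    (horient : ∀ p ∈ T, (p ∈ O ∨ swapS p ∈ O) ∧ ¬ (p ∈ O ∧ swapS p ∈ O))
    (hcons : ConsistentO O)
    {a b : V} (w : G.Walk a b) (hsup : ∀ v ∈ w.support, v ∉ partOf O) :
    ∃ p ∈ O, ∀ v ∈ w.support, v ∈ p.1 \ p.2 := by
  induction w with
  | nil =>
    obtain ⟨p, hp, hap⟩ := lemSingle G T O hTsep hOT (hsup _ (SimpleGraph.Walk.start_mem_support _))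
    refine ⟨p, hp, ?_⟩
    intro v hv
    simp only [SimpleGraph.Walk.support_nil, List.mem_cons, List.not_mem_nil,
      or_false] at hv
    subst hv; exact hap
  | @cons a c b h w ih =>
    obtain ⟨q, hq, hqall⟩ := ih (fun v hv => hsup v (by simp [hv]))
    obtain ⟨p, hp, hap⟩ := lemSingle G T O hTsep hOT (hsup a (by simp))
    have hc : c ∈ q.1 \ q.2 := hqall _ w.start_mem_support
    rcases lemA G T O hTsep hTnested hOT horient hcons hp hq hap hc h with
      hsub | hsub
    · refine ⟨q, hq, ?_⟩
      intro v hv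
      rcases (by simpa using hv : v = a ∨ v ∈ w.support) with rfl | hv'
      · exact hsub hap
      · exact hqall _ hv'
    · refine ⟨p, hp, ?_⟩
      intro v hv
      rcases (by simpa using hv : v = a ∨ v ∈ w.support) with rfl | hv'
      · exact hap
      · exact hsub (hqall _ hv')

/-- If P is a G[Π]-path (endvertices x, y in the part Π of a consistent
orientation O of a nested set T of separations of G, all internal vertices outside Π,
at least one internal vertex), then some separation of T has both x and y in its
separator. -/
theorem stmt_10 {V : Type*} (G : SimpleGraph V) (T O : Set (Set V × Set V))
    (hTsep : ∀ p ∈ T, IsGraphSep G p)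
    (hTsymm : ∀ p ∈ T, swapS p ∈ T)
    (hTnested : ∀ p ∈ T, ∀ q ∈ T, NestedPair p q)
    (hOT : O ⊆ T)
    (horient : ∀ p ∈ T, (p ∈ O ∨ swapS p ∈ O) ∧ ¬ (p ∈ O ∧ swapS p ∈ O))
    (hcons : ConsistentO O)
    (x y : V) (w : G.Walk x y) (hw : w.IsPath) (hlen : 2 ≤ w.length)
    (hx : x ∈ partOf O) (hy : y ∈ partOf O)
    (hint : ∀ v ∈ w.support, v ≠ x → v ≠ y → v ∉ partOf O) :
    ∃ s ∈ T, x ∈ s.1 ∩ s.2 ∧ y ∈ s.1 ∩ s.2 := by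
  cases w with
  | nil => simp at hlen
  | @cons _ u _ hxu w1 =>
    have hw1 : w1.IsPath := hw.of_cons
    have hw1len : 1 ≤ w1.length := by
      simp only [SimpleGraph.Walk.length_cons] at hlen; omega
    have hne : u ≠ y := by
      intro e
      subst e
      rw [SimpleGraph.Walk.isPath_iff_eq_nil] at hw1
      subst hw1
      simp at hw1len
    obtain ⟨v, hyv, w2, hw1r⟩ :=
      (w1.reverse).exists_eq_cons_of_ne hne.symm
    -- w2 : Walk v u ; interior of the path
    have hmem1 : ∀ z ∈ w2.support, z ∈ w1.support := by
      intro z hz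
      have : z ∈ w1.reverse.support := by
        rw [hw1r]; simp [hz]
      simpa [SimpleGraph.Walk.support_reverse] using this
    have hxnot : x ∉ w1.support := by
      have := hw.support_nodup
      simp only [SimpleGraph.Walk.support_cons, List.nodup_cons] at this
      exact this.1
    have hynot : y ∉ w2.support := by
      have hrp : w1.reverse.IsPath := hw1.reverse
      rw [hw1r] at hrp
      have := hrp.support_nodup
      simp only [SimpleGraph.Walk.support_cons, List.nodup_cons] at this
      exact this.1
    have hsup : ∀ z ∈ w2.support, z ∉ partOf O := by
      intro z hz
      refine hint z (by simp [hmem1 z hz]) ?_ ?_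
      · intro e; exact hxnot (e ▸ hmem1 z hz)
      · intro e; exact hynot (e ▸ hz)
    obtain ⟨p, hp, hall⟩ :=
      lemB G T O hTsep hTnested hOT horient hcons w2 hsup
    have hu : u ∈ p.1 \ p.2 := hall _ w2.end_mem_support
    have hv : v ∈ p.1 \ p.2 := hall _ w2.start_mem_support
    have hx2 : x ∈ p.2 := hx p hp
    have hy2 : y ∈ p.2 := hy p hp
    have hx1 : x ∈ p.1 := by
      by_contra hx1
      exact (hTsep p (hOT hp)).2 u hu x ⟨hx2, hx1⟩ hxu.symm
    have hy1 : y ∈ p.1 := by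
      by_contra hy1
      exact (hTsep p (hOT hp)).2 v hv y ⟨hy2, hy1⟩ hyv.symm
    exact ⟨p, hOT hp, ⟨hx1, hx2⟩, ⟨hy1, hy2⟩⟩
end

section
/- Let G be a graph, T a nested set of separations of G, O a consistent orientation of T with part Π. If W ⊆ V(G) induces a connected subgraph of G, then W ∩ Π induces a connected subgraph of the torso of O (the graph on Π obtained from G[Π] by adding an edge xy whenever distinct x, y ∈ Π lie together in the separator of some separation of O). -/
open Set

variable {V : Type*}

/-- The torso of an orientation O: the graph on the part Π with the edges of G[Π]
plus an edge between any two distinct vertices of Π lying together in the separator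
of some separation in O. (Vertices outside Π are isolated.) -/
def torso (G : SimpleGraph V) (O : Set (Set V × Set V)) : SimpleGraph V where
  Adj x y := x ≠ y ∧ x ∈ partOf O ∧ y ∈ partOf O ∧
    (G.Adj x y ∨ ∃ s ∈ O, (x ∈ s.1 ∩ s.2) ∧ (y ∈ s.1 ∩ s.2))
  symm := by
    constructor
    rintro x y ⟨hxy, hx, hy, h⟩
    refine ⟨hxy.symm, hy, hx, ?_⟩
    rcases h with h | ⟨s, hs, h1, h2⟩
    · exact Or.inl h.symm
    · exact Or.inr ⟨s, hs, h2, h1⟩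
  loopless := by
    constructor
    intro x h
    exact h.1 rfl

lemma sep_adj_mem {V : Type*} {G : SimpleGraph V} {p : Set V × Set V}
    (hp : IsGraphSep G p) {a b : V} (ha : a ∈ p.1 \ p.2) (hab : G.Adj a b) :
    b ∈ p.1 := by
  rcases hp with ⟨hcov, hsep⟩
  by_contra hb
  have hb2 : b ∈ p.1 ∪ p.2 := hcov.symm ▸ Set.mem_univ b
  rcases hb2 with hb1 | hb1
  · exact hb hb1
  · exact hsep a ha b ⟨hb1, hb⟩ hab

lemma sepLe_refl' {V : Type*} (p : Set V × Set V) : sepLe p p :=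
  ⟨subset_rfl, subset_rfl⟩

lemma key_stmt_11 {V : Type*} (G : SimpleGraph V) (T O : Set (Set V × Set V))
    (hTsep : ∀ p ∈ T, IsGraphSep G p)
    (hTnested : ∀ p ∈ T, ∀ q ∈ T, NestedPair p q)
    (hOT : O ⊆ T)
    (hcons : ConsistentO O)
    (W : Set V) :
    ∀ {x y : V} (w : G.Walk x y), (∀ v ∈ w.support, v ∈ W) → ∀ hy : y ∈ W ∩ partOf O,
    (∀ hx : x ∈ W ∩ partOf O,
        ((torso G O).induce (W ∩ partOf O)).Reachable ⟨x, hx⟩ ⟨y, hy⟩) ∧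
    (∀ p ∈ O, x ∈ p.1 \ p.2 → ∃ u ∈ O, sepLe p u ∧ ∃ z, ∃ hz : z ∈ W ∩ partOf O,
        z ∈ u.1 ∩ u.2 ∧
        ((torso G O).induce (W ∩ partOf O)).Reachable ⟨z, hz⟩ ⟨y, hy⟩) := by
  intro x y w
  induction w with
  | nil =>
    intro _ hy
    constructor
    · intro hx
      exact SimpleGraph.Reachable.refl _
    · intro p hp hxp
      exact absurd (hy.2 p hp) hxp.2
  | @cons x b y h w ih =>
    intro hsup hy
    have hsupw : ∀ v ∈ w.support, v ∈ W := fun v hv =>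
      hsup v (by rw [SimpleGraph.Walk.support_cons]; exact List.mem_cons_of_mem _ hv)
    have hxW : x ∈ W := hsup x (by simp)
    have hbW : b ∈ W := hsupw b w.start_mem_support
    by_cases hbPi : b ∈ partOf O
    · have hbWPi : b ∈ W ∩ partOf O := ⟨hbW, hbPi⟩
      have reachb := (ih hsupw hy).1 hbWPi
      constructor
      · intro hx
        have hadj : (torso G O).Adj x b := ⟨h.ne, hx.2, hbPi, Or.inl h⟩
        have hadj' : ((torso G O).induce (W ∩ partOf O)).Adj ⟨x, hx⟩ ⟨b, hbWPi⟩ := hadj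
        exact hadj'.reachable.trans reachb
      · intro p hp hxp
        have hbp1 : b ∈ p.1 := sep_adj_mem (hTsep p (hOT hp)) hxp h
        exact ⟨p, hp, sepLe_refl' p, b, hbWPi, ⟨hbp1, hbPi p hp⟩, reachb⟩
    · have hbPi' : ∃ p ∈ O, b ∉ p.2 := by
        by_contra hc
        push_neg at hc
        exact hbPi (fun p hp => hc p hp)
      obtain ⟨p0, hp0, hbp2⟩ := hbPi'
      have hbp0 : b ∈ p0.1 \ p0.2 := by
        have hb1 : b ∈ p0.1 ∪ p0.2 := (hTsep p0 (hOT hp0)).1.symm ▸ Set.mem_univ b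
        rcases hb1 with hb1 | hb1
        · exact ⟨hb1, hbp2⟩
        · exact absurd hb1 hbp2
      obtain ⟨u, hu, hpu, z, hz, hzu, reachz⟩ := (ih hsupw hy).2 p0 hp0 hbp0
      have hxp01 : x ∈ p0.1 := sep_adj_mem (hTsep p0 (hOT hp0)) hbp0 h.symm
      have hxu1 : x ∈ u.1 := hpu.1 hxp01
      constructor
      · intro hx
        have hxu2 : x ∈ u.2 := hx.2 u hu
        by_cases hxz : x = z
        · subst hxz
          exact reachz
        · have hadj : (torso G O).Adj x z :=
            ⟨hxz, hx.2, hz.2, Or.inr ⟨u, hu, ⟨hxu1, hxu2⟩, hzu⟩⟩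
          have hadj' : ((torso G O).induce (W ∩ partOf O)).Adj ⟨x, hx⟩ ⟨z, hz⟩ := hadj
          exact hadj'.reachable.trans reachz
      · intro p' hp' hxp'
        rcases hTnested u (hOT hu) p' (hOT hp') with h1 | h2 | h3 | h4
        · exact ⟨p', hp', sepLe_refl' p', z, hz, ⟨h1.1 hzu.1, hz.2 p' hp'⟩, reachz⟩
        · exact ⟨u, hu, h2, z, hz, hzu, reachz⟩
        · exact absurd (h3.1 hxu1) hxp'.2
        · by_cases hequ : p' = u
          · subst hequ
            exact ⟨p', hp', sepLe_refl' p', z, hz, hzu, reachz⟩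
          · by_cases heq2 : p' = swapS u
            · have : x ∈ p'.2 := by rw [heq2]; exact hxu1
              exact absurd this hxp'.2
            · exact absurd h4 (hcons p' hp' u hu hequ heq2)

/-- If W induces a connected subgraph of G, then W ∩ Π induces a
connected subgraph of the torso of O. -/
theorem stmt_11 {V : Type*} (G : SimpleGraph V) (T O : Set (Set V × Set V))
    (hTsep : ∀ p ∈ T, IsGraphSep G p)
    (hTsymm : ∀ p ∈ T, swapS p ∈ T)
    (hTnested : ∀ p ∈ T, ∀ q ∈ T, NestedPair p q)
    (hOT : O ⊆ T)
    (horient : ∀ p ∈ T, (p ∈ O ∨ swapS p ∈ O) ∧ ¬ (p ∈ O ∧ swapS p ∈ O))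
    (hcons : ConsistentO O)
    (W : Set V) (hW : (G.induce W).Connected) :
    ((torso G O).induce (W ∩ partOf O)).Preconnected := by
  rintro ⟨x, hx⟩ ⟨y, hy⟩
  obtain ⟨w0⟩ := hW.preconnected ⟨x, hx.1⟩ ⟨y, hy.1⟩
  let f : G.induce W →g G := ⟨Subtype.val, fun {a b} hab => hab⟩
  have hsup : ∀ v ∈ (w0.map f).support, v ∈ W := by
    intro v hv
    rw [SimpleGraph.Walk.support_map] at hv
    obtain ⟨a, _, rfl⟩ := List.mem_map.1 hv
    exact a.2
  exact (key_stmt_11 G T O hTsep hTnested hOT hcons W (w0.map f) hsup hy).1 hx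
end

section
/- Let G be a graph and let X ⊆ V(G) be principal, meaning X meets at most one component of G − Y for every finite Y ⊆ V(G). If {A,B} is a finite-order separation of G, then the graph G' obtained from G by adding all edges between pairs of distinct vertices of X is such that {A,B} is still a separation of G' (no edge of G' joins A\B to B\A). -/
open Set

variable {V : Type*}

/-- X is a principal vertex set: X meets at most one component of G − Y for every
finite vertex set Y. -/
def Principal (G : SimpleGraph V) (X : Set V) : Prop :=
  ∀ Y : Set V, Y.Finite → ∀ C D : Set V, ComponentOf G Y C → ComponentOf G Y D →
    (X ∩ C).Nonempty → (X ∩ D).Nonempty → C = D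

/-- The graph obtained from G by adding all edges between distinct vertices of X. -/
def addClique (G : SimpleGraph V) (X : Set V) : SimpleGraph V where
  Adj x y := G.Adj x y ∨ (x ≠ y ∧ x ∈ X ∧ y ∈ X)
  symm := by
    constructor
    rintro x y (h | ⟨hne, hx, hy⟩)
    · exact Or.inl h.symm
    · exact Or.inr ⟨hne.symm, hy, hx⟩
  loopless := by
    constructor
    rintro x (h | ⟨hne, _, _⟩)
    · exact G.irrefl h
    · exact hne rfl

lemma walk_stay {G : SimpleGraph V} {A B : Set V}
    (hcov : A ∪ B = Set.univ)
    (hno : ∀ a ∈ A \ B, ∀ b ∈ B \ A, ¬ G.Adj a b)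
    {v w : V} (p : G.Walk v w) (hav : ∀ x ∈ p.support, x ∉ A ∩ B)
    (hv : v ∈ A \ B) : w ∈ A \ B := by
  induction p with
  | nil => exact hv
  | cons h p ih =>
    rename_i u x y
    apply ih
    · intro z hz; exact hav z (by simp [hz])
    · have hxA : x ∈ A ∪ B := hcov ▸ Set.mem_univ x
      have hxne : x ∉ A ∩ B := hav x (by simp)
      rcases hxA with hA | hB
      · exact ⟨hA, fun hB => hxne ⟨hA, hB⟩⟩
      · exfalso
        have hxBA : x ∈ B \ A := ⟨hB, fun hA => hxne ⟨hA, hB⟩⟩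
        exact hno u hv x hxBA h

/-- If X is principal and {A,B} is a finite-order separation of G,
then {A,B} is still a separation of the graph G + clique on X. -/
theorem stmt_13 {V : Type*} (G : SimpleGraph V) (X : Set V) (hX : Principal G X)
    (A B : Set V) (hsep : IsGraphSep G (A, B)) (hord : (A ∩ B).Finite) :
    IsGraphSep (addClique G X) (A, B) := by
  obtain ⟨hcov, hno⟩ := hsep
  refine ⟨hcov, ?_⟩
  rintro a ha b hb (hadj | ⟨hne, haX, hbX⟩)
  · exact hno a ha b hb hadj
  · have haY : a ∉ A ∩ B := fun h => ha.2 h.2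
    have hbY : b ∉ A ∩ B := fun h => hb.2 h.1
    set Ca : Set V := {w | ∃ p : G.Walk a w, ∀ x ∈ p.support, x ∉ A ∩ B} with hCa
    set Cb : Set V := {w | ∃ p : G.Walk b w, ∀ x ∈ p.support, x ∉ A ∩ B} with hCb
    have haCa : a ∈ Ca := ⟨SimpleGraph.Walk.nil, by simpa using haY⟩
    have hbCb : b ∈ Cb := ⟨SimpleGraph.Walk.nil, by simpa using hbY⟩
    have heq : Ca = Cb := hX (A ∩ B) hord Ca Cb ⟨a, haY, rfl⟩ ⟨b, hbY, rfl⟩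
      ⟨a, haX, haCa⟩ ⟨b, hbX, hbCb⟩
    have : b ∈ Ca := heq ▸ hbCb
    obtain ⟨p, hp⟩ := this
    exact hb.2 (walk_stay hcov hno p hp ha).1
end

section
/- Let τ₁ and τ₂ be distinct ℵ₀-tangles of a graph G (consistent orientations of the set of all finite-order separations containing no finite star with finite interior), and suppose the separation {Z,𝒟} (with Z finite and 𝒟 a set of components of G − Z) distinguishes τ₁ and τ₂ efficiently, i.e., |Z| is minimal among separators of separations distinguishing them. If τ₁ contains (Z, {C}) for a single component C of G − Z (τ₁ 'lives in C'), then N(C) = Z. -/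
open Set

variable {V : Type*}

/-- A finite-order separation of G. -/
def IsFinSep (G : SimpleGraph V) (p : Set V × Set V) : Prop :=
  IsGraphSep G p ∧ (p.1 ∩ p.2).Finite

/-- An ℵ₀-tangle of G: a consistent orientation of all finite-order separations of G
containing no finite star of finite interior. -/
def IsTangle (G : SimpleGraph V) (τ : Set (Set V × Set V)) : Prop :=
  (∀ p ∈ τ, IsFinSep G p) ∧
  (∀ p, IsFinSep G p → (p ∈ τ ∨ swapS p ∈ τ)) ∧
  (∀ p, ¬ (p ∈ τ ∧ swapS p ∈ τ)) ∧
  ConsistentO τ ∧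
  (∀ F : Finset (Set V × Set V), (↑F : Set (Set V × Set V)) ⊆ τ →
    (∀ p ∈ F, ∀ q ∈ F, p ≠ q → sepLe p (swapS q)) →
    ¬ (⋂ p ∈ F, (p.2 : Set V)).Finite)

/-- The separation p distinguishes the tangles τ₁ and τ₂. -/
def Distinguishes (τ₁ τ₂ : Set (Set V × Set V)) (p : Set V × Set V) : Prop :=
  (p ∈ τ₁ ∧ swapS p ∈ τ₂) ∨ (p ∈ τ₂ ∧ swapS p ∈ τ₁)

section AuxReach
variable {V : Type*} {G : SimpleGraph V}

def Reach (G : SimpleGraph V) (Z : Set V) (a b : V) : Prop :=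
  ∃ p : G.Walk a b, ∀ x ∈ p.support, x ∉ Z

lemma Reach.symm {Z : Set V} {a b : V} (h : Reach G Z a b) : Reach G Z b a := by
  obtain ⟨p, hp⟩ := h
  exact ⟨p.reverse, fun x hx => hp x (by simpa [SimpleGraph.Walk.support_reverse] using hx)⟩

lemma Reach.trans {Z : Set V} {a b c : V} (h1 : Reach G Z a b) (h2 : Reach G Z b c) :
    Reach G Z a c := by
  obtain ⟨p, hp⟩ := h1; obtain ⟨q, hq⟩ := h2
  refine ⟨p.append q, fun x hx => ?_⟩
  rcases (SimpleGraph.Walk.mem_support_append_iff p q).mp hx with h | h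
  exacts [hp x h, hq x h]

lemma reach_self {Z : Set V} {v : V} (hv : v ∉ Z) : Reach G Z v v :=
  ⟨SimpleGraph.Walk.nil, by simp [hv]⟩

lemma reach_not_mem {Z : Set V} {a b : V} (h : Reach G Z a b) : b ∉ Z := by
  obtain ⟨p, hp⟩ := h; exact hp b p.end_mem_support

lemma reach_adj {Z : Set V} {a b : V} (hb : b ∉ Z) (ha : a ∉ Z) (hadj : G.Adj a b) :
    Reach G Z a b := by
  refine ⟨SimpleGraph.Walk.cons hadj SimpleGraph.Walk.nil, ?_⟩
  intro x hx
  simp at hx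
  rcases hx with rfl | rfl
  exacts [ha, hb]

lemma nbhd_subset_of_comp {Z C : Set V} (hC : ComponentOf G Z C) : nbhd G C ⊆ Z := by
  obtain ⟨v, hv, rfl⟩ := hC
  rintro x ⟨hxC, c, hc, hadj⟩
  by_contra hxZ
  exact hxC (Reach.trans hc (reach_adj hxZ (reach_not_mem hc) hadj.symm))

lemma comp_eq_or_disj {Z C D : Set V} (hC : ComponentOf G Z C) (hD : ComponentOf G Z D) :
    C = D ∨ ∀ x, x ∈ C → x ∉ D := by
  obtain ⟨v, hv, rfl⟩ := hC
  obtain ⟨u, hu, rfl⟩ := hD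
  by_cases h : ∃ x, Reach G Z v x ∧ Reach G Z u x
  · left
    obtain ⟨x, h1, h2⟩ := h
    ext w
    constructor
    · intro hw; exact Reach.trans h2 (Reach.trans (Reach.symm h1) hw)
    · intro hw; exact Reach.trans h1 (Reach.trans (Reach.symm h2) hw)
  · right; intro x hx hx'; exact h ⟨x, hx, hx'⟩

end AuxReach

/-- If the separation {Z,𝒟} distinguishes the distinct ℵ₀-tangles τ₁, τ₂
efficiently, and τ₁ lives in a single component C of G − Z, then N(C) = Z. -/
theorem stmt_18 {V : Type*} (G : SimpleGraph V) (τ₁ τ₂ : Set (Set V × Set V))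
    (h1 : IsTangle G τ₁) (h2 : IsTangle G τ₂) (hne : τ₁ ≠ τ₂)
    (Z : Set V) (hZ : Z.Finite) (𝒟 : Set (Set V))
    (h𝒟 : ∀ D ∈ 𝒟, ComponentOf G Z D)
    (hdist : Distinguishes τ₁ τ₂ ((⋃₀ 𝒟)ᶜ, Z ∪ ⋃₀ 𝒟))
    (heff : ∀ q : Set V × Set V, IsFinSep G q → Distinguishes τ₁ τ₂ q →
      Z.ncard ≤ (q.1 ∩ q.2).ncard)
    (C : Set V) (hC : ComponentOf G Z C)
    (hlive : ((Cᶜ : Set V), Z ∪ C) ∈ τ₁) :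
    nbhd G C = Z := by
  classical
  obtain ⟨h1sep, h1or, h1not, h1con, h1star⟩ := h1
  obtain ⟨h2sep, h2or, h2not, h2con, h2star⟩ := h2
  obtain ⟨v, hvZ, hCdef⟩ := hC
  have hCcomp : ComponentOf G Z C := ⟨v, hvZ, hCdef⟩
  have hvC : v ∈ C := by rw [hCdef]; exact reach_self hvZ
  have hCZ : ∀ x ∈ C, x ∉ Z := by
    intro x hx; rw [hCdef] at hx; exact reach_not_mem hx
  have hNZ : nbhd G C ⊆ Z := nbhd_subset_of_comp hCcomp
  have hNC : ∀ x ∈ nbhd G C, x ∉ C := fun x hx => hx.1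
  have h𝒟Z : ∀ x ∈ ⋃₀ 𝒟, x ∉ Z := by
    rintro x ⟨D, hD, hxD⟩
    obtain ⟨u, hu, hDdef⟩ := h𝒟 D hD
    rw [hDdef] at hxD; exact reach_not_mem hxD
  -- the candidate separation q = (Cᶜ, N(C) ∪ C)
  have hqsep : IsFinSep G ((Cᶜ : Set V), nbhd G C ∪ C) := by
    refine ⟨⟨?_, ?_⟩, ?_⟩
    · ext x
      simp only [Set.mem_union, Set.mem_compl_iff, Set.mem_univ, iff_true]
      by_cases h : x ∈ C
      · exact Or.inr (Or.inr h)
      · exact Or.inl h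
    · rintro a ⟨ha1, ha2⟩ b ⟨hb1, hb2⟩ hadj
      simp only [Set.mem_compl_iff, Set.mem_union, not_or] at ha1 ha2 hb1 hb2
      have hbC : b ∈ C := not_not.mp hb2
      exact ha2.1 ⟨ha1, b, hbC, hadj⟩
    · refine hZ.subset ?_
      rintro x ⟨hx1, hx2⟩
      rcases hx2 with h | h
      · exact hNZ h
      · exact absurd h hx1
  have hqint : ((Cᶜ : Set V) ∩ (nbhd G C ∪ C)) = nbhd G C := by
    ext x
    constructor
    · rintro ⟨hx1, hx2⟩
      rcases hx2 with h | h
      · exact h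
      · exact absurd h hx1
    · intro hx; exact ⟨hNC x hx, Or.inl hx⟩
  -- q ∈ τ₁
  have hq1 : ((Cᶜ : Set V), nbhd G C ∪ C) ∈ τ₁ := by
    rcases h1or _ hqsep with h | h
    · exact h
    exfalso
    have hne' : ((Cᶜ : Set V), Z ∪ C) ≠ swapS ((Cᶜ : Set V), nbhd G C ∪ C) := by
      intro he
      have h2' := congrArg Prod.snd he
      simp only [swapS] at h2'
      have : v ∈ (Cᶜ : Set V) := h2' ▸ (Or.inr hvC : v ∈ Z ∪ C)
      exact this hvC
    refine h1star {((Cᶜ : Set V), Z ∪ C), swapS ((Cᶜ : Set V), nbhd G C ∪ C)} ?_ ?_ ?_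
    · intro r hr
      simp only [Finset.coe_insert, Finset.coe_singleton, Set.mem_insert_iff,
        Set.mem_singleton_iff] at hr
      rcases hr with rfl | rfl
      exacts [hlive, h]
    · intro r hr s hs hrs
      simp only [Finset.mem_insert, Finset.mem_singleton] at hr hs
      rcases hr with rfl | rfl <;> rcases hs with rfl | rfl
      · exact absurd rfl hrs
      · exact ⟨subset_rfl, Set.union_subset_union_left C hNZ⟩
      · exact ⟨Set.union_subset_union_left C hNZ, subset_rfl⟩
      · exact absurd rfl hrs
    · refine hZ.subset ?_
      intro x hx
      simp only [Set.mem_iInter] at hx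
      have hx1 := hx ((Cᶜ : Set V), Z ∪ C) (by simp)
      have hx2 := hx (swapS ((Cᶜ : Set V), nbhd G C ∪ C)) (by simp)
      simp only [swapS] at hx1 hx2
      rcases hx1 with h' | h'
      · exact h'
      · exact absurd h' hx2
  -- if Z ⊆ N(C) we are done
  by_cases hZN : Z ⊆ nbhd G C
  · exact Set.Subset.antisymm hNZ hZN
  obtain ⟨z, hzZ, hzN⟩ := Set.not_subset.mp hZN
  have hzC : z ∉ C := fun h => hCZ z h hzZ
  -- swap q ∈ τ₂
  have hq2 : swapS ((Cᶜ : Set V), nbhd G C ∪ C) ∈ τ₂ := by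
    rcases h2or _ hqsep with hcontra | h
    swap
    · exact h
    exfalso
    rcases hdist with ⟨hp0t1, hsp0t2⟩ | ⟨hp0t2, hsp0t1⟩
    · by_cases hCD : C ∈ 𝒟
      · -- τ₂ contains q and swap p₀; consistency violated
        have hv𝒟 : v ∈ ⋃₀ 𝒟 := ⟨C, hCD, hvC⟩
        refine h2con _ hcontra _ hsp0t2 ?_ ?_ ?_
        · intro he
          have h2' : nbhd G C ∪ C = ((⋃₀ 𝒟)ᶜ : Set V) := congrArg Prod.snd he
          have : v ∈ ((⋃₀ 𝒟)ᶜ : Set V) := h2' ▸ (Or.inr hvC : v ∈ nbhd G C ∪ C)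
          exact this hv𝒟
        · intro he
          have h2' : nbhd G C ∪ C = Z ∪ ⋃₀ 𝒟 := congrArg Prod.snd he
          have : z ∈ nbhd G C ∪ C := h2'.symm ▸ (Or.inl hzZ : z ∈ Z ∪ ⋃₀ 𝒟)
          rcases this with h' | h'
          exacts [hzN h', hzC h']
        · constructor
          · simp only [swapS]
            rintro x (hx | hx)
            · exact Or.inl (hNZ hx)
            · exact Or.inr ⟨C, hCD, hx⟩
          · simp only [swapS]
            intro x hx hxC
            exact hx ⟨C, hCD, hxC⟩
      · -- τ₁ contains (Cᶜ, Z ∪ C) and p₀; consistency violated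
        have hC𝒟 : ∀ x ∈ C, x ∉ ⋃₀ 𝒟 := by
          rintro x hxC ⟨D, hD, hxD⟩
          rcases comp_eq_or_disj hCcomp (h𝒟 D hD) with heq | hdisj
          · exact hCD (heq ▸ hD)
          · exact hdisj x hxC hxD
        refine h1con _ hlive _ hp0t1 ?_ ?_ ?_
        · intro he
          have h2' : Z ∪ C = Z ∪ ⋃₀ 𝒟 := congrArg Prod.snd he
          have : v ∈ Z ∪ ⋃₀ 𝒟 := h2' ▸ (Or.inr hvC : v ∈ Z ∪ C)
          rcases this with h' | h'
          exacts [hvZ h', hC𝒟 v hvC h']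
        · intro he
          have he' : ((Cᶜ : Set V), Z ∪ C) = (Z ∪ ⋃₀ 𝒟, ((⋃₀ 𝒟)ᶜ : Set V)) := he
          have : (Z ∪ ⋃₀ 𝒟, ((⋃₀ 𝒟)ᶜ : Set V)) ∈ τ₁ := he' ▸ hlive
          exact h1not _ ⟨hp0t1, this⟩
        · constructor
          · simp only [swapS]
            rintro x (hx | hx) hx'
            exacts [h𝒟Z x hx' hx, hC𝒟 x hx hx']
          · simp only [swapS]
            rintro x (hx | hx) hxC
            exacts [hCZ x hxC hx, hC𝒟 x hxC hx]
    · by_cases hCD : C ∈ 𝒟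
      · -- τ₁ contains (Cᶜ, Z ∪ C) and swap p₀; consistency violated
        have hv𝒟 : v ∈ ⋃₀ 𝒟 := ⟨C, hCD, hvC⟩
        refine h1con _ hlive _ hsp0t1 ?_ ?_ ?_
        · intro he
          have h2' : Z ∪ C = ((⋃₀ 𝒟)ᶜ : Set V) := congrArg Prod.snd he
          have : v ∈ ((⋃₀ 𝒟)ᶜ : Set V) := h2' ▸ (Or.inr hvC : v ∈ Z ∪ C)
          exact this hv𝒟
        · intro he
          have he' : ((Cᶜ : Set V), Z ∪ C) = (((⋃₀ 𝒟)ᶜ : Set V), Z ∪ ⋃₀ 𝒟) := he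
          have : (((⋃₀ 𝒟)ᶜ : Set V), Z ∪ ⋃₀ 𝒟) ∈ τ₁ := he' ▸ hlive
          exact h1not _ ⟨this, hsp0t1⟩
        · constructor
          · simp only [swapS]
            rintro x (hx | hx)
            · exact Or.inl hx
            · exact Or.inr ⟨C, hCD, hx⟩
          · simp only [swapS]
            intro x hx hxC
            exact hx ⟨C, hCD, hxC⟩
      · -- τ₂ contains q and p₀; consistency violated
        have hC𝒟 : ∀ x ∈ C, x ∉ ⋃₀ 𝒟 := by
          rintro x hxC ⟨D, hD, hxD⟩
          rcases comp_eq_or_disj hCcomp (h𝒟 D hD) with heq | hdisj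
          · exact hCD (heq ▸ hD)
          · exact hdisj x hxC hxD
        refine h2con _ hcontra _ hp0t2 ?_ ?_ ?_
        · intro he
          have h2' : nbhd G C ∪ C = Z ∪ ⋃₀ 𝒟 := congrArg Prod.snd he
          have : v ∈ Z ∪ ⋃₀ 𝒟 := h2' ▸ (Or.inr hvC : v ∈ nbhd G C ∪ C)
          rcases this with h' | h'
          exacts [hvZ h', hC𝒟 v hvC h']
        · intro he
          have h2' : nbhd G C ∪ C = ((⋃₀ 𝒟)ᶜ : Set V) := congrArg Prod.snd he
          have hz' : z ∈ ((⋃₀ 𝒟)ᶜ : Set V) := fun h => h𝒟Z z h hzZ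
          have : z ∈ nbhd G C ∪ C := h2'.symm ▸ hz'
          rcases this with h' | h'
          exacts [hzN h', hzC h']
        · constructor
          · simp only [swapS]
            rintro x (hx | hx) hx'
            exacts [h𝒟Z x hx' (hNZ hx), hC𝒟 x hx hx']
          · simp only [swapS]
            rintro x (hx | hx) hxC
            exacts [hCZ x hxC hx, hC𝒟 x hxC hx]
  have hdistq : Distinguishes τ₁ τ₂ ((Cᶜ : Set V), nbhd G C ∪ C) := Or.inl ⟨hq1, hq2⟩
  have hle := heff _ hqsep hdistq
  rw [show (((Cᶜ : Set V), nbhd G C ∪ C).1 ∩ ((Cᶜ : Set V), nbhd G C ∪ C).2) = nbhd G C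
    from hqint] at hle
  exact Set.eq_of_subset_of_ncard_le hNZ hle hZ
end

section
/- Let G be a graph and τ an ℵ₀-tangle of G which is an ultrafilter tangle with critical vertex set X = X_τ and associated free ultrafilter U = U(τ,X) on the components of G − X. For every separation (Y,𝒟) ∈ τ with Y ⊇ X (Y finite, 𝒟 a set of components of G − Y), we have (Y,𝒟) ≤ (X, 𝒟↾X ∩ 𝒞) where 𝒞 is the set of components of G − X with neighbourhood X that avoid Y, and 𝒟↾X = {C component of G − X : ∃D ∈ 𝒟, D ⊆ C}; moreover (X, 𝒟↾X ∩ 𝒞) ∈ τ. -/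
open Set

variable {V : Type*}

/-- The collection 𝒟↾X ∩ 𝒞 of Lemma 3.1(i): components of G − X with neighbourhood
exactly X that avoid Y and include some member of 𝒟. -/
def restrCap (G : SimpleGraph V) (X Y : Set V) (𝒟 : Set (Set V)) : Set (Set V) :=
  {C | ComponentOf G X C ∧ (∃ D ∈ 𝒟, D ⊆ C) ∧ nbhd G C = X ∧ C ∩ Y = ∅}
section Aux
open SimpleGraph
variable {V : Type*} {G : SimpleGraph V} {X Z : Set V} {u v w x b : V}

/-- The component of `v` in `G − X`. -/
def gcmp (G : SimpleGraph V) (X : Set V) (v : V) : Set V :=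
  {w | ∃ p : G.Walk v w, ∀ x ∈ p.support, x ∉ X}

lemma componentOf_cmp (hv : v ∉ X) : ComponentOf G X (gcmp G X v) := ⟨v, hv, rfl⟩

lemma mem_cmp_self (hv : v ∉ X) : v ∈ gcmp G X v :=
  ⟨SimpleGraph.Walk.nil, by simp [hv]⟩

lemma not_mem_of_mem_cmp (h : w ∈ gcmp G X v) : w ∉ X := by
  obtain ⟨p, hp⟩ := h; exact hp w p.end_mem_support

lemma cmp_subset_of_mem (h : u ∈ gcmp G X v) : gcmp G X u ⊆ gcmp G X v := by
  obtain ⟨p, hp⟩ := h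
  rintro w ⟨q, hq⟩
  refine ⟨p.append q, ?_⟩
  intro y hy
  rcases (SimpleGraph.Walk.mem_support_append_iff _ _).mp hy with h' | h'
  · exact hp y h'
  · exact hq y h'

lemma mem_cmp_symm (h : u ∈ gcmp G X v) : v ∈ gcmp G X u := by
  obtain ⟨p, hp⟩ := h
  exact ⟨p.reverse, by
    intro y hy; apply hp; simpa [SimpleGraph.Walk.support_reverse] using hy⟩

lemma cmp_eq_of_mem (h : u ∈ gcmp G X v) : gcmp G X u = gcmp G X v :=
  subset_antisymm (cmp_subset_of_mem h) (cmp_subset_of_mem (mem_cmp_symm h))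

lemma adj_mem_cmp (h : u ∈ gcmp G X v) (hadj : G.Adj u b) (hb : b ∉ X) :
    b ∈ gcmp G X v := by
  obtain ⟨p, hp⟩ := h
  refine ⟨p.concat hadj, ?_⟩
  intro y hy
  rw [SimpleGraph.Walk.support_concat] at hy
  rcases List.mem_append.mp hy with h' | h'
  · exact hp y h'
  · rcases List.mem_singleton.mp h' with rfl; exact hb

lemma support_subset_cmp (p : G.Walk v w) (hp : ∀ y ∈ p.support, y ∉ X) :
    ∀ y ∈ p.support, y ∈ gcmp G X v := by
  classical
  intro y hy
  exact ⟨p.takeUntil y hy, fun z hz =>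
    hp z (SimpleGraph.Walk.support_takeUntil_subset _ hy hz)⟩

lemma cmp_mono (hXZ : X ⊆ Z) : gcmp G Z v ⊆ gcmp G X v := by
  rintro w ⟨p, hp⟩
  exact ⟨p, fun y hy hyX => hp y hy (hXZ hyX)⟩

lemma cmp_eq_or_disjoint {C D : Set V} (hC : ComponentOf G X C)
    (hD : ComponentOf G X D) : C = D ∨ C ∩ D = ∅ := by
  obtain ⟨a, ha, rfl⟩ := hC
  obtain ⟨c, hc, rfl⟩ := hD
  by_cases h : (gcmp G X a ∩ gcmp G X c).Nonempty
  · obtain ⟨z, hz1, hz2⟩ := h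
    exact Or.inl ((cmp_eq_of_mem hz1).symm.trans (cmp_eq_of_mem hz2))
  · exact Or.inr (Set.not_nonempty_iff_eq_empty.mp h)

lemma nbhd_subset {C : Set V} (hC : ComponentOf G X C) : nbhd G C ⊆ X := by
  obtain ⟨a, ha, rfl⟩ := hC
  rintro z ⟨hzC, c, hc, hadj⟩
  by_contra hzX
  exact hzC (adj_mem_cmp hc hadj.symm hzX)

end Aux

section Aux2
variable {V : Type*} {G : SimpleGraph V} {X Y Z : Set V} {u v w x b : V}
  {τ : Set (Set V × Set V)} {p q : Set V × Set V}

lemma walk_stay_s19 (hx : x ∈ X) (hnb : x ∉ nbhd G (gcmp G X v)) :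
    ∀ {u w : V} (p : G.Walk u w), (∀ y ∈ p.support, y ∉ X \ {x}) →
      u ∈ gcmp G X v → w ∈ gcmp G X v := by
  intro u w p
  induction p with
  | nil => intro _ hu; exact hu
  | @cons a b c hadj q ih =>
      intro hp ha
      have hb' : b ∉ X \ {x} := hp b (by simp)
      have hbx : b ≠ x := by
        rintro rfl
        exact hnb ⟨fun hbC => (not_mem_of_mem_cmp hbC) hx, a, ha, hadj.symm⟩
      have hbX : b ∉ X := fun h => hb' ⟨h, hbx⟩
      exact ih (fun y hy => hp y (by simp [SimpleGraph.Walk.support_cons, hy]))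
        (adj_mem_cmp ha hadj hbX)

/-- A component of `G − (X\{x})` not containing `x` is a component of `G − X`. -/
lemma componentOf_of_erase {C : Set V} (hC : ComponentOf G (X \ {x}) C)
    (hxC : x ∉ C) : ComponentOf G X C := by
  obtain ⟨a, ha, rfl⟩ := hC
  have haX : a ∉ X := by
    intro h
    rcases eq_or_ne a x with rfl | hne
    · exact hxC (mem_cmp_self ha)
    · exact ha ⟨h, hne⟩
  refine ⟨a, haX, ?_⟩
  apply subset_antisymm
  · rintro w ⟨p, hp⟩
    refine ⟨p, fun y hy hyX => ?_⟩
    have hyC : y ∈ gcmp G (X \ {x}) a := support_subset_cmp p hp y hy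
    exact (hp y hy) ⟨hyX, fun h => hxC (h ▸ hyC)⟩
  · exact cmp_mono Set.diff_subset

/-- A component of `G − X` avoiding `Y ⊇ X` is included in the corresponding
component of `G − Y`. -/
lemma cmp_subset_cmpY (hXY : X ⊆ Y) (hC : gcmp G X v ∩ Y = ∅) :
    gcmp G X v ⊆ gcmp G Y v := by
  rintro w ⟨p, hp⟩
  refine ⟨p, fun y hy hyY => ?_⟩
  have : y ∈ gcmp G X v := support_subset_cmp p hp y hy
  exact (Set.eq_empty_iff_forall_notMem.mp hC y) ⟨this, hyY⟩

lemma sUnion_not_mem_X {𝒜 : Set (Set V)} (h𝒜 : ∀ C ∈ 𝒜, ComponentOf G X C)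
    (hv : v ∈ ⋃₀ 𝒜) : v ∉ X := by
  obtain ⟨C, hC, hvC⟩ := hv
  obtain ⟨a, ha, rfl⟩ := h𝒜 C hC
  exact not_mem_of_mem_cmp hvC

lemma sUnion_disj {𝒜 ℬ : Set (Set V)} (h𝒜 : ∀ C ∈ 𝒜, ComponentOf G X C)
    (hℬ : ∀ C ∈ ℬ, ComponentOf G X C) (hd : ∀ C ∈ 𝒜, C ∉ ℬ) :
    ⋃₀ 𝒜 ∩ ⋃₀ ℬ = ∅ := by
  ext v
  simp only [Set.mem_inter_iff, Set.mem_empty_iff_false, iff_false]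
  rintro ⟨⟨C, hC, hvC⟩, ⟨D, hD, hvD⟩⟩
  rcases cmp_eq_or_disjoint (h𝒜 C hC) (hℬ D hD) with rfl | hdis
  · exact hd C hC hD
  · exact (Set.eq_empty_iff_forall_notMem.mp hdis v) ⟨hvC, hvD⟩

/-- The separation determined by a family of components of `G − X`. -/
lemma isFinSep_fam (hX : X.Finite) {𝒜 : Set (Set V)}
    (h𝒜 : ∀ C ∈ 𝒜, ComponentOf G X C) :
    IsFinSep G ((⋃₀ 𝒜)ᶜ, X ∪ ⋃₀ 𝒜) := by
  refine ⟨⟨?_, ?_⟩, ?_⟩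
  · ext v; simp only [Set.mem_union, Set.mem_compl_iff, Set.mem_univ, iff_true]
    tauto
  · rintro a ⟨ha1, ha2⟩ z ⟨hz1, hz2⟩ hadj
    simp only [Set.mem_union, not_or, Set.mem_compl_iff, not_not] at ha2 hz2
    obtain ⟨C, hC, hzC⟩ := hz2
    obtain ⟨c, hc, rfl⟩ := h𝒜 C hC
    exact ha1 ⟨_, hC, adj_mem_cmp hzC hadj.symm ha2.1⟩
  · apply hX.subset
    rintro v ⟨hv1, hv2⟩
    rcases hv2 with h | h
    · exact h
    · exact absurd h hv1

lemma isFinSep_swap (h : IsFinSep G p) : IsFinSep G (swapS p) := by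
  obtain ⟨⟨hcov, hedge⟩, hfin⟩ := h
  refine ⟨⟨by rw [Set.union_comm] at hcov; exact hcov, ?_⟩, ?_⟩
  · intro a ha z hz hadj
    exact hedge z hz a ha hadj.symm
  · rwa [Set.inter_comm] at hfin

lemma isFinSep_single {C : Set V} (hZ : Z.Finite) (hC : ComponentOf G Z C) :
    IsFinSep G (C ∪ Z, Cᶜ) := by
  obtain ⟨a, ha, rfl⟩ := hC
  refine ⟨⟨?_, ?_⟩, ?_⟩
  · ext v; simp only [Set.mem_union, Set.mem_compl_iff, Set.mem_univ, iff_true]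
    tauto
  · rintro u ⟨hu1, hu2⟩ z ⟨hz1, hz2⟩ hadj
    simp only [Set.mem_compl_iff, not_not] at hu2
    simp only [Set.mem_union, not_or] at hz2
    exact hz1 (adj_mem_cmp hu2 hadj hz2.2)
  · apply hZ.subset
    rintro v ⟨hv1, hv2⟩
    rcases hv1 with h | h
    · exact absurd h hv2
    · exact h

/-- Any separation in a tangle has infinite big side. -/
lemma infinite_side (hτ : IsTangle G τ) (hp : p ∈ τ) : ¬ (p.2).Finite := by
  intro hfin
  classical
  refine hτ.2.2.2.2 {p} ?_ ?_ (by simpa using hfin)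
  · simpa using hp
  · intro a ha c hc hac
    simp only [Finset.mem_singleton] at ha hc
    exact absurd (ha.trans hc.symm) hac

/-- Two members of a tangle never point away from each other. -/
lemma not_opp (hτ : IsTangle G τ) (hp : p ∈ τ) (hq : q ∈ τ)
    (hle : sepLe (swapS p) q) : False := by
  by_cases hps : p = swapS q
  · exact hτ.2.2.1 q ⟨hq, hps ▸ hp⟩
  by_cases hpq : p = q
  · subst hpq
    obtain ⟨h1, h2⟩ := hle
    have : p.2 ⊆ p.1 := h1
    have hfin : (p.2).Finite := ((hτ.1 p hp).2).subset (fun v hv => ⟨this hv, hv⟩)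
    exact infinite_side hτ hp hfin
  · exact hτ.2.2.2.1 p hp q hq hpq hps hle

lemma orient (hτ : IsTangle G τ) (hfs : IsFinSep G p) (hnot : p ∉ τ) :
    swapS p ∈ τ := (hτ.2.1 p hfs).resolve_left hnot

end Aux2

section Aux3
variable {V : Type*} {G : SimpleGraph V} {X Y Z : Set V} {u v w x b : V}
  {τ : Set (Set V × Set V)} {p q : Set V × Set V}

/-- Components of `G − X` whose neighbourhood misses `x`. -/
def famE (G : SimpleGraph V) (X : Set V) (x : V) : Set (Set V) :=
  {C | ComponentOf G X C ∧ x ∉ nbhd G C}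

/-- Components of `G − X` whose neighbourhood contains `x`. -/
def famN (G : SimpleGraph V) (X : Set V) (x : V) : Set (Set V) :=
  {C | ComponentOf G X C ∧ x ∈ nbhd G C}

lemma famE_comp : ∀ C ∈ famE G X x, ComponentOf G X C := fun _ h => h.1
lemma famN_comp : ∀ C ∈ famN G X x, ComponentOf G X C := fun _ h => h.1

lemma notMem_N_E (hv1 : v ∈ ⋃₀ famN G X x) (hv2 : v ∈ ⋃₀ famE G X x) : False := by
  obtain ⟨C, hC, hvC⟩ := hv1
  obtain ⟨D, hD, hvD⟩ := hv2
  rcases cmp_eq_or_disjoint hC.1 hD.1 with rfl | hdis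
  · exact hD.2 hC.2
  · exact (Set.eq_empty_iff_forall_notMem.mp hdis v) ⟨hvC, hvD⟩

lemma cover_E_N (hv : v ∉ X) : v ∈ ⋃₀ famE G X x ∪ ⋃₀ famN G X x := by
  by_cases h : x ∈ nbhd G (gcmp G X v)
  · exact Or.inr ⟨_, ⟨componentOf_cmp hv, h⟩, mem_cmp_self hv⟩
  · exact Or.inl ⟨_, ⟨componentOf_cmp hv, h⟩, mem_cmp_self hv⟩

lemma walk_from_x (hx : x ∈ X) :
    ∀ {u w : V} (p : G.Walk u w), (∀ y ∈ p.support, y ∉ X \ {x}) →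
      (u = x ∨ u ∈ ⋃₀ famN G X x) → (w = x ∨ w ∈ ⋃₀ famN G X x) := by
  intro u w p
  induction p with
  | nil => intro _ h; exact h
  | @cons a b c hadj q ih =>
      intro hp ha
      have hb' : b ∉ X \ {x} := hp b (by simp)
      have hq : ∀ y ∈ q.support, y ∉ X \ {x} :=
        fun y hy => hp y (by simp [SimpleGraph.Walk.support_cons, hy])
      rcases eq_or_ne b x with rfl | hbx
      · exact ih hq (Or.inl rfl)
      have hbX : b ∉ X := fun h => hb' ⟨h, hbx⟩
      have hxb : x ∉ gcmp G X b := fun h => (not_mem_of_mem_cmp h) hx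
      rcases ha with rfl | ⟨C, ⟨hCc, hCn⟩, haC⟩
      · refine ih hq (Or.inr ⟨gcmp G X b, ⟨componentOf_cmp hbX, ?_⟩, mem_cmp_self hbX⟩)
        exact ⟨hxb, b, mem_cmp_self hbX, hadj⟩
      · obtain ⟨t, ht, rfl⟩ := hCc
        exact ih hq (Or.inr ⟨_, ⟨⟨t, ht, rfl⟩, hCn⟩, adj_mem_cmp haC hadj hbX⟩)

lemma cmpx_eq (hx : x ∈ X) :
    gcmp G (X \ {x}) x = {x} ∪ ⋃₀ famN G X x := by
  have hx' : x ∉ X \ {x} := fun h => h.2 rfl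
  apply subset_antisymm
  · rintro w ⟨p, hp⟩
    have := walk_from_x (G := G) hx p hp (Or.inl rfl)
    rcases this with rfl | h
    · exact Or.inl rfl
    · exact Or.inr h
  · rintro w (rfl | ⟨C, ⟨⟨a, ha, rfl⟩, hxn⟩, hwC⟩)
    · exact mem_cmp_self hx'
    · obtain ⟨hxnot, c, hc, hadj⟩ := hxn
      have hwc : w ∈ gcmp G X c := (cmp_eq_of_mem hc) ▸ hwC
      obtain ⟨p, hp⟩ := hwc
      refine ⟨SimpleGraph.Walk.cons hadj p, ?_⟩
      intro y hy
      rw [SimpleGraph.Walk.support_cons] at hy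
      rcases List.mem_cons.mp hy with rfl | hy'
      · exact hx'
      · exact fun hyX => (hp y hy') hyX.1

/-- The separation `(X ∪ E_x, X ∪ N_x)` is a finite-order separation. -/
lemma isFinSep_EN (hX : X.Finite) (hx : x ∈ X) :
    IsFinSep G (X ∪ ⋃₀ famE G X x, X ∪ ⋃₀ famN G X x) := by
  refine ⟨⟨?_, ?_⟩, ?_⟩
  · ext v
    simp only [Set.mem_union, Set.mem_univ, iff_true]
    by_cases hv : v ∈ X
    · exact Or.inl (Or.inl hv)
    · rcases cover_E_N (x := x) hv with h | h
      · exact Or.inl (Or.inr h)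
      · exact Or.inr (Or.inr h)
  · rintro a ⟨ha1, ha2⟩ z ⟨hz1, hz2⟩ hadj
    simp only [Set.mem_union, not_or] at ha2 hz2
    rcases ha1 with h | h
    · exact ha2.1 h
    obtain ⟨C, ⟨⟨t, ht, rfl⟩, hCE⟩, haC⟩ := h
    rcases hz1 with h' | h'
    · exact hz2.1 h'
    have : z ∈ gcmp G X t := adj_mem_cmp haC hadj hz2.1
    exact hz2.2 ⟨_, ⟨⟨t, ht, rfl⟩, hCE⟩, this⟩
  · apply hX.subset
    rintro v ⟨hv1, hv2⟩
    rcases hv1 with h | h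
    · exact h
    rcases hv2 with h' | h'
    · exact h'
    · exact absurd (notMem_N_E h' h) not_false

/-- Key minimality consequence: the separation witnessing that the components
seeing `x` form a large collection is in the tangle. -/
lemma lemE (hτ : IsTangle G τ) (hX : X.Finite)
    (hfree : ∀ C : Set V, ComponentOf G X C → (C ∪ X, (Cᶜ : Set V)) ∈ τ)
    (hmin : ∀ X' : Set V, X'.Finite →
      (∀ C : Set V, ComponentOf G X' C → (C ∪ X', (Cᶜ : Set V)) ∈ τ) → X ⊆ X')
    (hx : x ∈ X) :
    (X ∪ ⋃₀ famE G X x, X ∪ ⋃₀ famN G X x) ∈ τ := by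
  classical
  set E := ⋃₀ famE G X x with hE
  set N := ⋃₀ famN G X x with hN
  by_contra hm
  have hm' : (X ∪ N, X ∪ E) ∈ τ := orient hτ (isFinSep_EN hX hx) hm
  -- minimality gives a bad component of G − (X \ {x})
  obtain ⟨C', hC', hnot⟩ :
      ∃ C', ComponentOf G (X \ {x}) C' ∧ (C' ∪ (X \ {x}), (C'ᶜ : Set V)) ∉ τ := by
    by_contra h
    push_neg at h
    have := hmin (X \ {x}) hX.diff h
    exact (this hx).2 rfl
  have hσ : ((C'ᶜ : Set V), C' ∪ (X \ {x})) ∈ τ :=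
    orient hτ (isFinSep_single hX.diff hC') hnot
  by_cases hxC : x ∈ C'
  · -- C' is the component of x; contradiction with hm' by a 2-star
    have hC'eq : C' = {x} ∪ N := by
      obtain ⟨a, ha, rfl⟩ := hC'
      show gcmp G (X \ {x}) a = {x} ∪ N
      rw [← cmp_eq_of_mem hxC, cmpx_eq hx, hN]
    have h2 : C' ∪ (X \ {x}) = X ∪ N := by
      rw [hC'eq]
      ext v
      simp only [Set.mem_union, Set.mem_diff, Set.mem_singleton_iff]
      constructor
      · rintro ((rfl | h) | ⟨h, _⟩)
        · exact Or.inl hx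
        · exact Or.inr h
        · exact Or.inl h
      · rintro (h | h)
        · rcases eq_or_ne v x with rfl | hne
          · exact Or.inl (Or.inl rfl)
          · exact Or.inr ⟨h, hne⟩
        · exact Or.inl (Or.inr h)
    have hcompl : ({x} ∪ N)ᶜ ⊆ X ∪ E := by
      intro v hv
      simp only [Set.mem_compl_iff, Set.mem_union, Set.mem_singleton_iff, not_or] at hv
      by_cases hvX : v ∈ X
      · exact Or.inl hvX
      · rcases cover_E_N (x := x) hvX with h | h
        · exact Or.inr h
        · exact absurd h hv.2
    set σ : Set V × Set V := ((C'ᶜ : Set V), C' ∪ (X \ {x})) with hσdef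
    set m' : Set V × Set V := (X ∪ N, X ∪ E) with hm'def
    have hne : σ ≠ m' := by
      intro h
      have h1 : σ.1 = m'.1 := congrArg Prod.fst h
      have hxm : x ∈ m'.1 := Or.inl hx
      rw [← h1] at hxm
      exact hxm hxC
    have hstar := hτ.2.2.2.2 {σ, m'} ?_ ?_
    · apply hstar
      apply hX.subset
      intro v hv
      simp only [Finset.mem_insert, Finset.mem_singleton, Set.mem_iInter] at hv
      have hv1 : v ∈ σ.2 := hv σ (by simp)
      have hv2 : v ∈ m'.2 := hv m' (by simp)
      rw [hσdef] at hv1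
      rw [hm'def] at hv2
      simp only at hv1 hv2
      rw [h2] at hv1
      rcases hv1 with h | h
      · exact h
      rcases hv2 with h' | h'
      · exact h'
      · exact absurd (notMem_N_E h h') not_false
    · intro z hz
      simp only [Finset.coe_insert, Finset.coe_singleton, Set.mem_insert_iff,
        Set.mem_singleton_iff] at hz
      rcases hz with rfl | rfl
      · exact hσ
      · exact hm'
    · intro a ha c hc hac
      simp only [Finset.mem_insert, Finset.mem_singleton] at ha hc
      have key1 : sepLe σ (swapS m') := by
        constructor
        · show σ.1 ⊆ m'.2
          rw [hσdef, hm'def]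
          simp only
          rw [hC'eq]
          exact hcompl
        · show m'.1 ⊆ σ.2
          rw [hσdef, hm'def, h2]
      have key2 : sepLe m' (swapS σ) := by
        constructor
        · show m'.1 ⊆ σ.2
          rw [hσdef, hm'def, h2]
        · show σ.1 ⊆ m'.2
          rw [hσdef, hm'def]
          simp only
          rw [hC'eq]
          exact hcompl
      rcases ha with rfl | rfl <;> rcases hc with rfl | rfl
      · exact absurd rfl hac
      · exact key1
      · exact key2
      · exact absurd rfl hac
  · -- C' is a component of G − X as well; contradiction with hfree
    have hcomp : ComponentOf G X C' := componentOf_of_erase hC' hxC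
    have := hfree C' hcomp
    exact absurd (not_opp hτ hσ this ⟨Set.union_subset_union_right C' Set.diff_subset,
      subset_rfl⟩) not_false
end Aux3

section Aux4
variable {V : Type*} {G : SimpleGraph V} {X Y : Set V} {v x : V}
  {τ : Set (Set V × Set V)}

/-- The separation `(X, 𝒜)` of a family of components. -/
def eSep (X : Set V) (𝒜 : Set (Set V)) : Set V × Set V :=
  (X ∪ ⋃₀ 𝒜, (⋃₀ 𝒜)ᶜ)

def famY (G : SimpleGraph V) (X Y : Set V) : Set (Set V) :=
  {C | ComponentOf G X C ∧ nbhd G C = X ∧ C ∩ Y ≠ ∅}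

def famD (G : SimpleGraph V) (X Y : Set V) (𝒟 : Set (Set V)) : Set (Set V) :=
  {C | ComponentOf G X C ∧ nbhd G C = X ∧ C ∩ Y = ∅ ∧ ¬ ∃ D ∈ 𝒟, D ⊆ C}

def famP (G : SimpleGraph V) (X : Set V) (x : V) : Set (Set V) :=
  {C | ComponentOf G X C ∧ nbhd G C ≠ X ∧
    ∃ h : ∃ y, y ∈ X \ nbhd G C, h.choose = x}

lemma sepLe_star {𝒜 ℬ : Set (Set V)} (h𝒜 : ∀ C ∈ 𝒜, ComponentOf G X C)
    (hℬ : ∀ C ∈ ℬ, ComponentOf G X C) (hd : ⋃₀ 𝒜 ∩ ⋃₀ ℬ = ∅) :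
    sepLe (eSep X 𝒜) (swapS (eSep X ℬ)) := by
  constructor
  · rintro v (hv | hv)
    · exact fun h => (sUnion_not_mem_X hℬ h) hv
    · exact fun h => (Set.eq_empty_iff_forall_notMem.mp hd v) ⟨hv, h⟩
  · rintro v (hv | hv)
    · exact fun h => (sUnion_not_mem_X h𝒜 h) hv
    · exact fun h => (Set.eq_empty_iff_forall_notMem.mp hd v) ⟨h, hv⟩

end Aux4

/-- For an ultrafilter tangle τ with critical vertex set X (X is the
least finite vertex set whose induced ultrafilter is free), every (Y,𝒟) ∈ τ with
Y ⊇ X satisfies (Y,𝒟) ≤ (X, 𝒟↾X ∩ 𝒞) and (X, 𝒟↾X ∩ 𝒞) ∈ τ, where 𝒞 is the set of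
components of G − X with neighbourhood X avoiding Y. -/
theorem stmt_19 {V : Type*} (G : SimpleGraph V) (τ : Set (Set V × Set V))
    (hτ : IsTangle G τ) (X : Set V) (hX : X.Finite)
    (hfree : ∀ C : Set V, ComponentOf G X C → (C ∪ X, (Cᶜ : Set V)) ∈ τ)
    (hmin : ∀ X' : Set V, X'.Finite →
      (∀ C : Set V, ComponentOf G X' C → (C ∪ X', (Cᶜ : Set V)) ∈ τ) → X ⊆ X')
    (Y : Set V) (hY : Y.Finite) (hXY : X ⊆ Y)
    (𝒟 : Set (Set V)) (h𝒟 : ∀ D ∈ 𝒟, ComponentOf G Y D)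
    (hin : ((⋃₀ 𝒟)ᶜ, Y ∪ ⋃₀ 𝒟) ∈ τ) :
    sepLe ((⋃₀ 𝒟)ᶜ, Y ∪ ⋃₀ 𝒟)
        ((⋃₀ restrCap G X Y 𝒟)ᶜ, X ∪ ⋃₀ restrCap G X Y 𝒟) ∧
      ((⋃₀ restrCap G X Y 𝒟)ᶜ, X ∪ ⋃₀ restrCap G X Y 𝒟) ∈ τ := by
  classical
  set S := restrCap G X Y 𝒟 with hSdef
  have hScomp : ∀ C ∈ S, ComponentOf G X C := fun C h => h.1
  -- each member of S is a member of 𝒟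
  have hSsub : S ⊆ 𝒟 := by
    rintro C ⟨hCcomp, ⟨D, hD𝒟, hDC⟩, hnb, hCY⟩
    obtain ⟨vD, hvD, rfl⟩ := h𝒟 D hD𝒟
    obtain ⟨a, ha, rfl⟩ := hCcomp
    have hvC : vD ∈ gcmp G X a := hDC (mem_cmp_self hvD)
    have hCeq : gcmp G X vD = gcmp G X a := cmp_eq_of_mem hvC
    have hsub : gcmp G X a ⊆ gcmp G Y vD := by
      rw [← hCeq]
      exact cmp_subset_cmpY hXY (by rw [hCeq]; exact hCY)
    have heq : gcmp G X a = gcmp G Y vD := subset_antisymm hsub hDC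
    show gcmp G X a ∈ 𝒟
    rw [heq]; exact hD𝒟
  constructor
  · exact ⟨Set.compl_subset_compl.mpr (Set.sUnion_mono hSsub),
      Set.union_subset_union hXY (Set.sUnion_mono hSsub)⟩
  -- main part
  by_contra ht
  have heS : eSep X S ∈ τ := orient hτ (isFinSep_fam hX hScomp) ht
  -- the finitely many components meeting Y
  have hAYcomp : ∀ C ∈ famY G X Y, ComponentOf G X C := fun C h => h.1
  have hADcomp : ∀ C ∈ famD G X Y 𝒟, ComponentOf G X C := fun C h => h.1
  have hAPcomp : ∀ x, ∀ C ∈ famP G X x, ComponentOf G X C := fun _ C h => h.1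
  have hAYfin : (famY G X Y).Finite := by
    apply (hY.image (fun y => gcmp G X y)).subset
    rintro C ⟨hCc, hnb, hCY⟩
    obtain ⟨y, hyC, hyY⟩ := Set.nonempty_iff_ne_empty.mpr hCY
    obtain ⟨a, ha, rfl⟩ := hCc
    exact ⟨y, hyY, cmp_eq_of_mem hyC⟩
  -- piece famY
  have heAY : eSep X (famY G X Y) ∈ τ := by
    by_contra h
    have hsep : ((⋃₀ famY G X Y)ᶜ, X ∪ ⋃₀ famY G X Y) ∈ τ :=
      (hτ.2.1 _ (isFinSep_fam hX hAYcomp)).resolve_right h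
    set p₀ : Set V × Set V := ((⋃₀ famY G X Y)ᶜ, X ∪ ⋃₀ famY G X Y) with hp₀
    set F2 : Finset (Set V × Set V) :=
      insert p₀ (hAYfin.toFinset.image fun C => (C ∪ X, (Cᶜ : Set V))) with hF2
    have hmemF2 : ∀ p ∈ F2, p = p₀ ∨ ∃ C ∈ famY G X Y, p = (C ∪ X, (Cᶜ : Set V)) := by
      intro p hp
      rcases Finset.mem_insert.mp hp with h' | h'
      · exact Or.inl h'
      · obtain ⟨C, hC, rfl⟩ := Finset.mem_image.mp h'
        exact Or.inr ⟨C, hAYfin.mem_toFinset.mp hC, rfl⟩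
    refine hτ.2.2.2.2 F2 ?_ ?_ ?_
    · intro p hp
      rcases hmemF2 p hp with rfl | ⟨C, hC, rfl⟩
      · exact hsep
      · exact hfree C (hAYcomp C hC)
    · intro p hp q hq hne
      have hCX : ∀ C ∈ famY G X Y, C ∪ X ⊆ X ∪ ⋃₀ famY G X Y := by
        rintro C hC v (hv | hv)
        · exact Or.inr ⟨C, hC, hv⟩
        · exact Or.inl hv
      have hCc : ∀ C ∈ famY G X Y, (⋃₀ famY G X Y)ᶜ ⊆ Cᶜ :=
        fun C hC => Set.compl_subset_compl.mpr (Set.subset_sUnion_of_mem hC)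
      rcases hmemF2 p hp with rfl | ⟨C, hC, rfl⟩ <;>
        rcases hmemF2 q hq with h2 | ⟨C', hC', rfl⟩
      · exact absurd h2.symm hne
      · exact ⟨hCc C' hC', hCX C' hC'⟩
      · rw [h2]; exact ⟨hCX C hC, hCc C hC⟩
      · have hCC' : C ≠ C' := by
          rintro rfl; exact hne rfl
        have hdis : C ∩ C' = ∅ :=
          (cmp_eq_or_disjoint (hAYcomp C hC) (hAYcomp C' hC')).resolve_left hCC'
        constructor
        · rintro v (hv | hv) hv'
          · exact (Set.eq_empty_iff_forall_notMem.mp hdis v) ⟨hv, hv'⟩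
          · obtain ⟨a, ha, rfl⟩ := hAYcomp C' hC'
            exact (not_mem_of_mem_cmp hv') hv
        · rintro v (hv | hv) hv'
          · exact (Set.eq_empty_iff_forall_notMem.mp hdis v) ⟨hv', hv⟩
          · obtain ⟨a, ha, rfl⟩ := hAYcomp C hC
            exact (not_mem_of_mem_cmp hv') hv
    · apply hX.subset
      intro v hv
      rw [Set.mem_iInter₂] at hv
      have hv0 : v ∈ p₀.2 := hv p₀ (Finset.mem_insert_self _ _)
      rcases hv0 with h' | h'
      · exact h'
      · obtain ⟨C, hC, hvC⟩ := h'
        have : v ∈ (C ∪ X, (Cᶜ : Set V)).2 := by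
          refine hv _ (Finset.mem_insert_of_mem (Finset.mem_image.mpr
            ⟨C, hAYfin.mem_toFinset.mpr hC, rfl⟩))
        exact absurd hvC this
  -- piece famD
  have heAD : eSep X (famD G X Y 𝒟) ∈ τ := by
    by_contra h
    have hsep : ((⋃₀ famD G X Y 𝒟)ᶜ, X ∪ ⋃₀ famD G X Y 𝒟) ∈ τ :=
      (hτ.2.1 _ (isFinSep_fam hX hADcomp)).resolve_right h
    have hDnotAD : ∀ v, v ∈ ⋃₀ 𝒟 → v ∈ ⋃₀ famD G X Y 𝒟 → False := by
      rintro v ⟨D, hD, hvD⟩ ⟨C, hC, hvC⟩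
      obtain ⟨vD, hvDY, rfl⟩ := h𝒟 D hD
      obtain ⟨a, ha, rfl⟩ := hC.1
      refine hC.2.2.2 ⟨gcmp G Y vD, hD, ?_⟩
      have h1 : gcmp G Y vD = gcmp G Y v := (cmp_eq_of_mem hvD).symm
      have h2 : gcmp G X a = gcmp G X v := (cmp_eq_of_mem hvC).symm
      show gcmp G Y vD ⊆ gcmp G X a
      rw [h1, h2]
      exact cmp_mono hXY
    refine not_opp hτ hin hsep ⟨?_, ?_⟩
    · rintro v (hv | hv) hv'
      · obtain ⟨C, hC, hvC⟩ := hv'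
        exact (Set.eq_empty_iff_forall_notMem.mp hC.2.2.1 v) ⟨hvC, hv⟩
      · exact hDnotAD v hv hv'
    · rintro v (hv | hv) hv'
      · obtain ⟨D, hD, hvD⟩ := hv'
        obtain ⟨vD, hvDY, rfl⟩ := h𝒟 D hD
        exact (not_mem_of_mem_cmp hvD) (hXY hv)
      · exact hDnotAD v hv' hv
  -- pieces famP
  have heAP : ∀ x ∈ X, eSep X (famP G X x) ∈ τ := by
    intro x hx
    by_contra h
    have hsep : ((⋃₀ famP G X x)ᶜ, X ∪ ⋃₀ famP G X x) ∈ τ :=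
      (hτ.2.1 _ (isFinSep_fam hX (hAPcomp x))).resolve_right h
    have hEx := lemE hτ hX hfree hmin hx
    refine not_opp hτ hEx hsep ⟨?_, ?_⟩
    · rintro v (hv | hv) hv'
      · exact (sUnion_not_mem_X (hAPcomp x) hv') hv
      · obtain ⟨C, hC, hvC⟩ := hv
        obtain ⟨C', hC', hvC'⟩ := hv'
        have hxC' : x ∉ nbhd G C' := by
          obtain ⟨hex, hch⟩ := hC'.2.2
          have := hex.choose_spec
          rw [hch] at this
          exact this.2
        rcases cmp_eq_or_disjoint hC.1 hC'.1 with rfl | hdis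
        · exact hxC' hC.2
        · exact (Set.eq_empty_iff_forall_notMem.mp hdis v) ⟨hvC, hvC'⟩
    · rintro v (hv | hv)
      · exact Or.inl hv
      · obtain ⟨C, hC, hvC⟩ := hv
        have hxC : x ∉ nbhd G C := by
          obtain ⟨hex, hch⟩ := hC.2.2
          have := hex.choose_spec
          rw [hch] at this
          exact this.2
        exact Or.inr ⟨C, ⟨hC.1, hxC⟩, hvC⟩
  -- the final star
  set F : Finset (Set V × Set V) :=
    insert (eSep X S) (insert (eSep X (famY G X Y)) (insert (eSep X (famD G X Y 𝒟))
      (hX.toFinset.image fun x => eSep X (famP G X x)))) with hF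
  have hQ : ∀ p ∈ F, ∃ 𝒜, (∀ C ∈ 𝒜, ComponentOf G X C) ∧ p = eSep X 𝒜 ∧
      (𝒜 = S ∨ 𝒜 = famY G X Y ∨ 𝒜 = famD G X Y 𝒟 ∨ ∃ x, 𝒜 = famP G X x) := by
    intro p hp
    rcases Finset.mem_insert.mp hp with rfl | hp
    · exact ⟨S, hScomp, rfl, Or.inl rfl⟩
    rcases Finset.mem_insert.mp hp with rfl | hp
    · exact ⟨_, hAYcomp, rfl, Or.inr (Or.inl rfl)⟩
    rcases Finset.mem_insert.mp hp with rfl | hp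
    · exact ⟨_, hADcomp, rfl, Or.inr (Or.inr (Or.inl rfl))⟩
    obtain ⟨x, hx, rfl⟩ := Finset.mem_image.mp hp
    exact ⟨_, hAPcomp x, rfl, Or.inr (Or.inr (Or.inr ⟨x, rfl⟩))⟩
  have hdisj : ∀ 𝒜 ℬ : Set (Set V),
      (𝒜 = S ∨ 𝒜 = famY G X Y ∨ 𝒜 = famD G X Y 𝒟 ∨ ∃ x, 𝒜 = famP G X x) →
      (ℬ = S ∨ ℬ = famY G X Y ∨ ℬ = famD G X Y 𝒟 ∨ ∃ x, ℬ = famP G X x) →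
      𝒜 = ℬ ∨ ∀ C ∈ 𝒜, C ∉ ℬ := by
    rintro 𝒜 ℬ (rfl | rfl | rfl | ⟨x, rfl⟩) (rfl | rfl | rfl | ⟨y, rfl⟩)
    · exact Or.inl rfl
    · exact Or.inr fun C hC hC' => hC'.2.2 hC.2.2.2
    · exact Or.inr fun C hC hC' => hC'.2.2.2 hC.2.1
    · exact Or.inr fun C hC hC' => hC'.2.1 hC.2.2.1
    · exact Or.inr fun C hC hC' => hC.2.2 hC'.2.2.2
    · exact Or.inl rfl
    · exact Or.inr fun C hC hC' => hC.2.2 hC'.2.2.1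
    · exact Or.inr fun C hC hC' => hC'.2.1 hC.2.1
    · exact Or.inr fun C hC hC' => hC.2.2.2 hC'.2.1
    · exact Or.inr fun C hC hC' => hC'.2.2 hC.2.2.1
    · exact Or.inl rfl
    · exact Or.inr fun C hC hC' => hC'.2.1 hC.2.1
    · exact Or.inr fun C hC hC' => hC.2.1 hC'.2.2.1
    · exact Or.inr fun C hC hC' => hC.2.1 hC'.2.1
    · exact Or.inr fun C hC hC' => hC.2.1 hC'.2.1
    · rcases eq_or_ne x y with rfl | hxy
      · exact Or.inl rfl
      · refine Or.inr fun C hC hC' => hxy ?_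
        obtain ⟨he1, hc1⟩ := hC.2.2
        obtain ⟨he2, hc2⟩ := hC'.2.2
        have : he1 = he2 := rfl
        rw [this] at hc1
        exact hc1.symm.trans hc2
  refine hτ.2.2.2.2 F ?_ ?_ ?_
  · intro p hp
    rcases Finset.mem_insert.mp hp with rfl | hp
    · exact heS
    rcases Finset.mem_insert.mp hp with rfl | hp
    · exact heAY
    rcases Finset.mem_insert.mp hp with rfl | hp
    · exact heAD
    obtain ⟨x, hx, rfl⟩ := Finset.mem_image.mp hp
    exact heAP x (hX.mem_toFinset.mp hx)
  · intro p hp q hq hne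
    obtain ⟨𝒜, h𝒜c, rfl, hQ𝒜⟩ := hQ p hp
    obtain ⟨ℬ, hℬc, rfl, hQℬ⟩ := hQ q hq
    rcases hdisj 𝒜 ℬ hQ𝒜 hQℬ with rfl | hd
    · exact absurd rfl hne
    · exact sepLe_star h𝒜c hℬc (sUnion_disj h𝒜c hℬc hd)
  · apply hX.subset
    intro v hv
    rw [Set.mem_iInter₂] at hv
    by_contra hvX
    have hvC : v ∈ gcmp G X v := mem_cmp_self hvX
    have hcomp : ComponentOf G X (gcmp G X v) := componentOf_cmp hvX
    by_cases hnb : nbhd G (gcmp G X v) = X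
    · by_cases hCY : gcmp G X v ∩ Y = ∅
      · by_cases hD : ∃ D ∈ 𝒟, D ⊆ gcmp G X v
        · have hCS : gcmp G X v ∈ S := ⟨hcomp, hD, hnb, hCY⟩
          have := hv (eSep X S) (Finset.mem_insert_self _ _)
          exact this ⟨_, hCS, hvC⟩
        · have hCS : gcmp G X v ∈ famD G X Y 𝒟 := ⟨hcomp, hnb, hCY, hD⟩
          have := hv (eSep X (famD G X Y 𝒟)) (by
            rw [hF]
            exact Finset.mem_insert_of_mem (Finset.mem_insert_of_mem
              (Finset.mem_insert_self _ _)))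
          exact this ⟨_, hCS, hvC⟩
      · have hCS : gcmp G X v ∈ famY G X Y := ⟨hcomp, hnb, hCY⟩
        have := hv (eSep X (famY G X Y)) (by
          rw [hF]
          exact Finset.mem_insert_of_mem (Finset.mem_insert_self _ _))
        exact this ⟨_, hCS, hvC⟩
    · have hex : ∃ y, y ∈ X \ nbhd G (gcmp G X v) := by
        rcases Set.exists_of_ssubset (Set.ssubset_iff_subset_ne.mpr
          ⟨nbhd_subset hcomp, hnb⟩) with ⟨y, hy1, hy2⟩
        exact ⟨y, hy1, hy2⟩
      have hCS : gcmp G X v ∈ famP G X hex.choose := ⟨hcomp, hnb, hex, rfl⟩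
      have hchX : hex.choose ∈ X := hex.choose_spec.1
      have := hv (eSep X (famP G X hex.choose)) (by
        rw [hF]
        refine Finset.mem_insert_of_mem (Finset.mem_insert_of_mem
          (Finset.mem_insert_of_mem (Finset.mem_image.mpr
            ⟨hex.choose, hX.mem_toFinset.mpr hchX, rfl⟩)))
      )
      exact this ⟨_, hCS, hvC⟩
end
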